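/- arXiv:1507.06053 — 5 statements merged into one kernel-verified Lean document; each statement's English description precedes it below -/
import Mathlib

section
/- Let (G, prec) be a simple preference system where G is bipartite. Then the fractional stable matching polytope FSM(G, prec), defined by the constraints x(phi(e)) >= 1 for all edges e, x(delta(v)) <= 1 for all vertices v, and x >= 0, has only integral vertices; equivalently, FSM(G, prec) equals the convex hull of characteristic vectors of stable matchings. -/
attribute [local instance] Classical.propDecidable

/-- Edge `e` is incident to vertex `v` (multigraph given by endpoint maps `fst`, `snd`). -/
def Incid {V E : Type} (fst snd : E → V) (e : E) (v : V) : Prop :=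
  fst e = v ∨ snd e = v

/-- Edge `e` joins the vertices `u` and `w`. -/
def Joins {V E : Type} (fst snd : E → V) (e : E) (u w : V) : Prop :=
  (fst e = u ∧ snd e = w) ∨ (fst e = w ∧ snd e = u)

/-- In the preference system `(G, prec)`, edge `f` dominates edge `e`:
they share an endpoint `v` and `v` prefers `f` to `e`. -/
def Dominates {V E : Type} (fst snd : E → V) (prec : V → E → E → Prop) (f e : E) : Prop :=
  ∃ v, Incid fst snd e v ∧ Incid fst snd f v ∧ prec v f e

/-- `prec` is a preference system: for each vertex `v`, `prec v` is a strict linear order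
on the set of edges incident to `v`. -/
def IsPrefOrder {V E : Type} (fst snd : E → V) (prec : V → E → E → Prop) : Prop :=
  (∀ v e, ¬ prec v e e) ∧
  (∀ v e f g, prec v e f → prec v f g → prec v e g) ∧
  (∀ v e f, Incid fst snd e v → Incid fst snd f v → e ≠ f → prec v e f ∨ prec v f e)

/-- The graph `(V, E)` is simple: no loops and no parallel edges. -/
def SimpleG {V E : Type} (fst snd : E → V) : Prop :=
  (∀ e, fst e ≠ snd e) ∧
  (∀ e f, e ≠ f → ¬ ((fst e = fst f ∧ snd e = snd f) ∨ (fst e = snd f ∧ snd e = fst f)))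

/-- The fractional stable matching polytope `FSM(G, prec)`:
`x ≥ 0`, `x(δ(v)) ≤ 1` for every vertex `v`, and `x(φ(e)) ≥ 1` for every edge `e`,
where `φ(e)` consists of `e` together with all edges dominating `e`. -/
def FSMset {V E : Type} [Fintype V] [Fintype E] (fst snd : E → V)
    (prec : V → E → E → Prop) : Set (E → ℝ) :=
  {x | (∀ e, 0 ≤ x e) ∧
       (∀ v, ∑ e ∈ Finset.univ.filter (fun e => Incid fst snd e v), x e ≤ 1) ∧
       (∀ e, x e + ∑ f ∈ Finset.univ.filter
          (fun f => f ≠ e ∧ Dominates fst snd prec f e), x f ≥ 1)}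

/-- `M` is a stable matching of the preference system: a matching such that every edge is
in `M` or dominated by an edge of `M`. -/
def IsStableMatching {V E : Type} (fst snd : E → V) (prec : V → E → E → Prop)
    (M : Finset E) : Prop :=
  (∀ e ∈ M, ∀ f ∈ M, e ≠ f → ∀ v, ¬ (Incid fst snd e v ∧ Incid fst snd f v)) ∧
  (∀ e, e ∈ M ∨ ∃ f ∈ M, Dominates fst snd prec f e)

/-- The set of characteristic vectors of stable matchings. -/
def SMvecs {V E : Type} (fst snd : E → V) (prec : V → E → E → Prop) : Set (E → ℝ) :=
  {x | ∃ M : Finset E, IsStableMatching fst snd prec M ∧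
        x = fun e => if e ∈ M then (1 : ℝ) else 0}

/-- The preference system admits no odd cycle with cyclic preferences. -/
def NoOddCyclicCycle {V E : Type} (fst snd : E → V) (prec : V → E → E → Prop) : Prop :=
  ∀ n : ℕ, Odd n → ∀ (c : ZMod n → V) (g : ZMod n → E),
    Function.Injective c →
    (∀ i, Joins fst snd (g i) (c i) (c (i + 1))) →
    ¬ ((∀ i, prec (c (i + 1)) (g i) (g (i + 1))) ∨
       (∀ i, prec (c (i + 1)) (g (i + 1)) (g i)))


-- Auxiliary development
set_option linter.unusedSectionVars false
set_option linter.unusedVariables false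
set_option linter.unusedSectionVars false
set_option linter.unusedVariables false






-- auxiliary definitions
noncomputable def Dset {V E : Type} [Fintype E] (fst snd : E → V) (prec : V → E → E → Prop)
    (v : V) (e : E) : Finset E :=
  Finset.univ.filter (fun f => f ≠ e ∧ Incid fst snd f v ∧ prec v f e)

def manV {V E : Type} (fst snd : E → V) (side : V → Bool) (e : E) : V :=
  if side (fst e) then fst e else snd e

def womV {V E : Type} (fst snd : E → V) (side : V → Bool) (e : E) : V :=
  if side (fst e) then snd e else fst e

noncomputable def Aval {V E : Type} [Fintype E] (fst snd : E → V) (prec : V → E → E → Prop)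
    (side : V → Bool) (x : E → ℝ) (e : E) : ℝ :=
  ∑ f ∈ Dset fst snd prec (manV fst snd side e) e, x f

noncomputable def Cval {V E : Type} [Fintype E] (fst snd : E → V) (prec : V → E → E → Prop)
    (side : V → Bool) (x : E → ℝ) (e : E) : ℝ :=
  ∑ f ∈ Dset fst snd prec (womV fst snd side e) e, x f

section Basics
variable {V E : Type} (fst snd : E → V) (side : V → Bool)

lemma side_man (hbip : ∀ e, side (fst e) ≠ side (snd e)) (e : E) :
    side (manV fst snd side e) = true := by
  unfold manV
  by_cases h : side (fst e)
  · simp [h]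
  · simp only [h, if_false]
    have := hbip e
    simp only [Bool.not_eq_true] at h
    rw [h] at this
    exact (Bool.not_eq_false _).mp (Ne.symm this)

lemma side_wom (hbip : ∀ e, side (fst e) ≠ side (snd e)) (e : E) :
    side (womV fst snd side e) = false := by
  unfold womV
  by_cases h : side (fst e)
  · simp only [h, if_true]
    have := hbip e
    rw [h] at this
    exact (Bool.not_eq_true _).mp (Ne.symm this)
  · simp only [h, if_false]
    exact (Bool.not_eq_true _).mp h

lemma incid_man (e : E) : Incid fst snd e (manV fst snd side e) := by
  unfold manV Incid
  by_cases h : side (fst e) <;> simp [h]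

lemma incid_wom (e : E) : Incid fst snd e (womV fst snd side e) := by
  unfold womV Incid
  by_cases h : side (fst e) <;> simp [h]

lemma man_ne_wom (hbip : ∀ e, side (fst e) ≠ side (snd e)) (e : E) :
    manV fst snd side e ≠ womV fst snd side e := by
  intro h
  have h1 := side_man fst snd side hbip e
  have h2 := side_wom fst snd side hbip e
  rw [h, h2] at h1
  exact Bool.false_ne_true h1

lemma man_eq_of_incid (hbip : ∀ e, side (fst e) ≠ side (snd e)) (f : E) (v : V)
    (hv : side v = true) (hf : Incid fst snd f v) : manV fst snd side f = v := by
  unfold manV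
  rcases hf with h | h
  · rw [h, hv]; simp
  · have : side (fst f) = false := by
      have := hbip f
      rw [h, hv] at this
      exact (Bool.not_eq_true _).mp this
    rw [this]; simp [h]

lemma wom_eq_of_incid (hbip : ∀ e, side (fst e) ≠ side (snd e)) (f : E) (v : V)
    (hv : side v = false) (hf : Incid fst snd f v) : womV fst snd side f = v := by
  unfold womV
  rcases hf with h | h
  · have : side (fst f) = false := by rw [h, hv]
    rw [this]; simp [h]
  · have : side (fst f) = true := by
      have := hbip f
      rw [h, hv] at this
      exact (Bool.not_eq_false _).mp this
    rw [this]; simp [h]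

lemma incid_cases (e : E) (v : V) (h : Incid fst snd e v) :
    v = manV fst snd side e ∨ v = womV fst snd side e := by
  unfold manV womV
  by_cases hs : side (fst e) <;> rcases h with h | h <;> simp [hs, h.symm]

lemma joins_of_incid (e : E) (u w : V) (huw : u ≠ w)
    (h1 : Incid fst snd e u) (h2 : Incid fst snd e w) : Joins fst snd e u w := by
  rcases h1 with h1 | h1 <;> rcases h2 with h2 | h2
  · exact absurd (h1.symm.trans h2) huw
  · exact Or.inl ⟨h1, h2⟩
  · exact Or.inr ⟨h2, h1⟩
  · exact absurd (h1.symm.trans h2) huw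

lemma nopar (hsimple : SimpleG fst snd) (e f : E) (u w : V) (hne : e ≠ f)
    (huw : u ≠ w) (heu : Incid fst snd e u) (hew : Incid fst snd e w)
    (hfu : Incid fst snd f u) (hfw : Incid fst snd f w) : False := by
  have he := joins_of_incid fst snd e u w huw heu hew
  have hf := joins_of_incid fst snd f u w huw hfu hfw
  rcases he with ⟨h1, h2⟩ | ⟨h1, h2⟩ <;> rcases hf with ⟨h3, h4⟩ | ⟨h3, h4⟩ <;>
    apply hsimple.2 e f hne
  · exact Or.inl ⟨h1.trans h3.symm, h2.trans h4.symm⟩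
  · exact Or.inr ⟨h1.trans h4.symm, h2.trans h3.symm⟩
  · exact Or.inr ⟨h1.trans h4.symm, h2.trans h3.symm⟩
  · exact Or.inl ⟨h1.trans h3.symm, h2.trans h4.symm⟩

end Basics
section Sums
variable {V E : Type} [Fintype V] [Fintype E] (fst snd : E → V)
  (prec : V → E → E → Prop) (side : V → Bool)

lemma Dset_mem (v : V) (e f : E) :
    f ∈ Dset fst snd prec v e ↔ f ≠ e ∧ Incid fst snd f v ∧ prec v f e := by
  unfold Dset; simp

lemma dom_decomp (hsimple : SimpleG fst snd) (hbip : ∀ e, side (fst e) ≠ side (snd e)) (e : E) :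
    Finset.univ.filter (fun f => f ≠ e ∧ Dominates fst snd prec f e)
      = Dset fst snd prec (manV fst snd side e) e ∪ Dset fst snd prec (womV fst snd side e) e := by
  ext f
  simp only [Finset.mem_filter, Finset.mem_univ, true_and, Finset.mem_union, Dset_mem]
  constructor
  · rintro ⟨hfe, v, hev, hfv, hp⟩
    rcases incid_cases fst snd side e v hev with h | h
    · left; exact ⟨hfe, h ▸ hfv, h ▸ hp⟩
    · right; exact ⟨hfe, h ▸ hfv, h ▸ hp⟩
  · rintro (⟨hfe, hfv, hp⟩ | ⟨hfe, hfv, hp⟩)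
    · exact ⟨hfe, _, incid_man fst snd side e, hfv, hp⟩
    · exact ⟨hfe, _, incid_wom fst snd side e, hfv, hp⟩

lemma dom_disj (hsimple : SimpleG fst snd) (hbip : ∀ e, side (fst e) ≠ side (snd e)) (e : E) :
    Disjoint (Dset fst snd prec (manV fst snd side e) e)
      (Dset fst snd prec (womV fst snd side e) e) := by
  rw [Finset.disjoint_left]
  intro f hf1 hf2
  rw [Dset_mem] at hf1 hf2
  exact nopar fst snd hsimple e f (manV fst snd side e) (womV fst snd side e)
    (Ne.symm hf1.1) (man_ne_wom fst snd side hbip e) (incid_man fst snd side e)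
    (incid_wom fst snd side e) hf1.2.1 hf2.2.1

lemma dom_split (hsimple : SimpleG fst snd) (hbip : ∀ e, side (fst e) ≠ side (snd e))
    (x : E → ℝ) (e : E) :
    ∑ f ∈ Finset.univ.filter (fun f => f ≠ e ∧ Dominates fst snd prec f e), x f
      = Aval fst snd prec side x e + Cval fst snd prec side x e := by
  rw [dom_decomp fst snd prec side hsimple hbip e,
    Finset.sum_union (dom_disj fst snd prec side hsimple hbip e)]
  rfl

lemma Aval_nonneg (x : E → ℝ) (hx0 : ∀ e, 0 ≤ x e) (e : E) :
    0 ≤ Aval fst snd prec side x e :=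
  Finset.sum_nonneg (fun f _ => hx0 f)

lemma Cval_nonneg (x : E → ℝ) (hx0 : ∀ e, 0 ≤ x e) (e : E) :
    0 ≤ Cval fst snd prec side x e :=
  Finset.sum_nonneg (fun f _ => hx0 f)

lemma Aval_deg (x : E → ℝ) (hx0 : ∀ e, 0 ≤ x e)
    (hdeg : ∀ v, ∑ e ∈ Finset.univ.filter (fun e => Incid fst snd e v), x e ≤ 1) (e : E) :
    Aval fst snd prec side x e + x e ≤ 1 := by
  have hmem : e ∉ Dset fst snd prec (manV fst snd side e) e := by
    rw [Dset_mem]; tauto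
  have hsub : insert e (Dset fst snd prec (manV fst snd side e) e)
      ⊆ Finset.univ.filter (fun f => Incid fst snd f (manV fst snd side e)) := by
    intro f hf
    rcases Finset.mem_insert.mp hf with h | h
    · subst h; exact Finset.mem_filter.mpr ⟨Finset.mem_univ _, incid_man fst snd side f⟩
    · exact Finset.mem_filter.mpr ⟨Finset.mem_univ _, ((Dset_mem fst snd prec _ e f).mp h).2.1⟩
  calc Aval fst snd prec side x e + x e
      = ∑ f ∈ insert e (Dset fst snd prec (manV fst snd side e) e), x f := by
        rw [Finset.sum_insert hmem, Aval]; ring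
    _ ≤ ∑ f ∈ Finset.univ.filter (fun f => Incid fst snd f (manV fst snd side e)), x f :=
        Finset.sum_le_sum_of_subset_of_nonneg hsub (fun f _ _ => hx0 f)
    _ ≤ 1 := hdeg _

end Sums
section KeyEq
variable {V E : Type} [Fintype V] [Fintype E] (fst snd : E → V)
  (prec : V → E → E → Prop) (side : V → Bool)

lemma swap_sum (F : E → V → ℝ) :
    ∑ e, ∑ v ∈ Finset.univ.filter (fun v => Incid fst snd e v), F e v
      = ∑ v, ∑ e ∈ Finset.univ.filter (fun e => Incid fst snd e v), F e v := by
  simp_rw [Finset.sum_filter]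
  exact Finset.sum_comm

lemma pairsum (hsimple : SimpleG fst snd) (hbip : ∀ e, side (fst e) ≠ side (snd e))
    (e : E) (g : V → ℝ) :
    ∑ v ∈ Finset.univ.filter (fun v => Incid fst snd e v), g v
      = g (manV fst snd side e) + g (womV fst snd side e) := by
  have hset : Finset.univ.filter (fun v => Incid fst snd e v) = {fst e, snd e} := by
    ext v
    simp [Incid, Finset.mem_insert, eq_comm]
  rw [hset, Finset.sum_pair (hsimple.1 e)]
  unfold manV womV
  by_cases h : side (fst e) <;> simp [h, add_comm]

lemma double_sum (hsimple : SimpleG fst snd) (hbip : ∀ e, side (fst e) ≠ side (snd e))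
    (g : E → ℝ) :
    ∑ v, ∑ e ∈ Finset.univ.filter (fun e => Incid fst snd e v), g e = 2 * ∑ e, g e := by
  rw [← swap_sum fst snd (fun e _ => g e)]
  have : ∀ e : E, ∑ _v ∈ Finset.univ.filter (fun v => Incid fst snd e v), g e = 2 * g e := by
    intro e
    rw [pairsum fst snd side hsimple hbip e (fun _ => g e)]
    ring
  rw [Finset.sum_congr rfl (fun e _ => this e), ← Finset.mul_sum]

lemma vertex_pairs (hord : IsPrefOrder fst snd prec) (x : E → ℝ) (v : V) :
    2 * ∑ e ∈ Finset.univ.filter (fun e => Incid fst snd e v),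
        (x e * ∑ f ∈ Dset fst snd prec v e, x f)
      = (∑ e ∈ Finset.univ.filter (fun e => Incid fst snd e v), x e) ^ 2
        - ∑ e ∈ Finset.univ.filter (fun e => Incid fst snd e v), (x e) ^ 2 := by
  set δ := Finset.univ.filter (fun e => Incid fst snd e v) with hδ
  have hDset : ∀ e, Dset fst snd prec v e = δ.filter (fun f => f ≠ e ∧ prec v f e) := by
    intro e
    ext f
    simp only [Dset_mem, hδ, Finset.mem_filter, Finset.mem_univ, true_and]
    tauto
  have hT : ∀ e, x e * ∑ f ∈ Dset fst snd prec v e, x f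
      = ∑ f ∈ δ, (if f ≠ e ∧ prec v f e then x e * x f else 0) := by
    intro e
    rw [hDset e, Finset.mul_sum, ← Finset.sum_filter]
  have hT2 : ∑ e ∈ δ, (x e * ∑ f ∈ Dset fst snd prec v e, x f)
      = ∑ e ∈ δ, ∑ f ∈ δ, (if f ≠ e ∧ prec v f e then x e * x f else 0) :=
    Finset.sum_congr rfl (fun e _ => hT e)
  have hTrans : ∑ e ∈ δ, ∑ f ∈ δ, (if f ≠ e ∧ prec v f e then x e * x f else 0)
      = ∑ e ∈ δ, ∑ f ∈ δ, (if e ≠ f ∧ prec v e f then x f * x e else 0) :=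
    Finset.sum_comm
  have hpt : ∀ e ∈ δ, ∀ f ∈ δ,
      (if f ≠ e ∧ prec v f e then x e * x f else 0)
        + (if e ≠ f ∧ prec v e f then x f * x e else 0)
      = (if e ≠ f then x e * x f else 0) := by
    intro e he f hf
    rw [hδ, Finset.mem_filter] at he hf
    by_cases hef : e = f
    · subst hef
      simp
    · have htri := hord.2.2 v e f he.2 hf.2 hef
      have hnb : ¬ (prec v e f ∧ prec v f e) := by
        rintro ⟨h1, h2⟩
        exact hord.1 v e (hord.2.1 v e f e h1 h2)
      rcases htri with h | h
      · rw [if_neg (by tauto), if_pos ⟨hef, h⟩, if_pos hef]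
        ring
      · rw [if_pos ⟨Ne.symm hef, h⟩, if_neg (by tauto), if_pos hef]
        ring
  have hsum2 : 2 * ∑ e ∈ δ, (x e * ∑ f ∈ Dset fst snd prec v e, x f)
      = ∑ e ∈ δ, ∑ f ∈ δ, (if e ≠ f then x e * x f else 0) := by
    have e1 : (∑ e ∈ δ, ∑ f ∈ δ, (if f ≠ e ∧ prec v f e then x e * x f else 0))
        + (∑ e ∈ δ, ∑ f ∈ δ, (if e ≠ f ∧ prec v e f then x f * x e else 0))
        = ∑ e ∈ δ, ∑ f ∈ δ, (if e ≠ f then x e * x f else 0) := by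
      rw [← Finset.sum_add_distrib]
      apply Finset.sum_congr rfl
      intro e he
      rw [← Finset.sum_add_distrib]
      exact Finset.sum_congr rfl (fun f hf => hpt e he f hf)
    linarith [hT2, hTrans, e1]
  have hinner : ∀ e ∈ δ, ∑ f ∈ δ, (if e ≠ f then x e * x f else 0)
      = x e * (∑ f ∈ δ, x f) - x e ^ 2 := by
    intro e he
    have h1 : ∀ f, (if e ≠ f then x e * x f else 0)
        = x e * x f - (if e = f then x e * x f else 0) := by
      intro f
      by_cases h : e = f <;> simp [h]
    rw [Finset.sum_congr rfl (fun f _ => h1 f), Finset.sum_sub_distrib,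
      Finset.sum_ite_eq δ e (fun f => x e * x f), if_pos he, ← Finset.mul_sum]
    ring
  rw [hsum2, Finset.sum_congr rfl hinner, Finset.sum_sub_distrib, ← Finset.sum_mul]
  ring

lemma key_identity (hord : IsPrefOrder fst snd prec) (hsimple : SimpleG fst snd)
    (hbip : ∀ e, side (fst e) ≠ side (snd e)) (x : E → ℝ) :
    2 * ∑ e, x e * (x e + Aval fst snd prec side x e + Cval fst snd prec side x e)
      = ∑ v, (∑ e ∈ Finset.univ.filter (fun e => Incid fst snd e v), x e) ^ 2 := by
  have hAC : ∀ e, Aval fst snd prec side x e + Cval fst snd prec side x e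
      = ∑ v ∈ Finset.univ.filter (fun v => Incid fst snd e v),
          (∑ f ∈ Dset fst snd prec v e, x f) := by
    intro e
    rw [pairsum fst snd side hsimple hbip e (fun v => ∑ f ∈ Dset fst snd prec v e, x f)]
    rfl
  have step1 : ∑ e, x e * (Aval fst snd prec side x e + Cval fst snd prec side x e)
      = ∑ v, ∑ e ∈ Finset.univ.filter (fun e => Incid fst snd e v),
          (x e * ∑ f ∈ Dset fst snd prec v e, x f) := by
    rw [← swap_sum fst snd (fun e v => x e * ∑ f ∈ Dset fst snd prec v e, x f)]
    apply Finset.sum_congr rfl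
    intro e _
    rw [hAC e, Finset.mul_sum]
  have step2 : 2 * ∑ v, ∑ e ∈ Finset.univ.filter (fun e => Incid fst snd e v),
        (x e * ∑ f ∈ Dset fst snd prec v e, x f)
      = ∑ v, ((∑ e ∈ Finset.univ.filter (fun e => Incid fst snd e v), x e) ^ 2
          - ∑ e ∈ Finset.univ.filter (fun e => Incid fst snd e v), (x e) ^ 2) := by
    rw [Finset.mul_sum]
    exact Finset.sum_congr rfl (fun v _ => vertex_pairs fst snd prec hord x v)
  have step3 : ∑ v, ∑ e ∈ Finset.univ.filter (fun e => Incid fst snd e v), (x e) ^ 2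
      = 2 * ∑ e, (x e) ^ 2 := double_sum fst snd side hsimple hbip (fun e => (x e) ^ 2)
  have expand : ∀ e, x e * (x e + Aval fst snd prec side x e + Cval fst snd prec side x e)
      = (x e) ^ 2 + x e * (Aval fst snd prec side x e + Cval fst snd prec side x e) := by
    intro e; ring
  rw [Finset.sum_congr rfl (fun e _ => expand e), Finset.sum_add_distrib]
  rw [Finset.sum_sub_distrib] at step2
  rw [step3] at step2
  rw [mul_add, step1]
  linarith [step2]

end KeyEq

section KeyEq2
variable {V E : Type} [Fintype V] [Fintype E] (fst snd : E → V)
  (prec : V → E → E → Prop) (side : V → Bool)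

lemma key_ge (hsimple : SimpleG fst snd) (hbip : ∀ e, side (fst e) ≠ side (snd e))
    (x : E → ℝ) (hx : x ∈ FSMset fst snd prec) (e : E) :
    1 ≤ x e + Aval fst snd prec side x e + Cval fst snd prec side x e := by
  have h := hx.2.2 e
  rw [dom_split fst snd prec side hsimple hbip x e] at h
  linarith

lemma key_eq (hord : IsPrefOrder fst snd prec) (hsimple : SimpleG fst snd)
    (hbip : ∀ e, side (fst e) ≠ side (snd e))
    (x : E → ℝ) (hx : x ∈ FSMset fst snd prec) (e : E) (hpos : 0 < x e) :
    x e + Aval fst snd prec side x e + Cval fst snd prec side x e = 1 := by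
  have hK1 := key_ge fst snd prec side hsimple hbip x hx
  obtain ⟨hx0, hdeg, _⟩ := hx
  have hid := key_identity fst snd prec side hord hsimple hbip x
  have hSv : ∀ v, (∑ e ∈ Finset.univ.filter (fun e => Incid fst snd e v), x e) ^ 2
      ≤ ∑ e ∈ Finset.univ.filter (fun e => Incid fst snd e v), x e := by
    intro v
    have h1 := hdeg v
    have h0 : 0 ≤ ∑ e ∈ Finset.univ.filter (fun e => Incid fst snd e v), x e :=
      Finset.sum_nonneg (fun f _ => hx0 f)
    nlinarith
  have hup : ∑ v, (∑ e ∈ Finset.univ.filter (fun e => Incid fst snd e v), x e) ^ 2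
      ≤ ∑ v, ∑ e ∈ Finset.univ.filter (fun e => Incid fst snd e v), x e :=
    Finset.sum_le_sum (fun v _ => hSv v)
  have hdd := double_sum fst snd side hsimple hbip x
  have hge : ∀ e, x e ≤ x e * (x e + Aval fst snd prec side x e + Cval fst snd prec side x e) := by
    intro e
    nlinarith [hK1 e, hx0 e]
  have hsumle : ∑ e, x e * (x e + Aval fst snd prec side x e + Cval fst snd prec side x e)
      ≤ ∑ e, x e := by linarith
  have hsumge : ∑ e, x e
      ≤ ∑ e, x e * (x e + Aval fst snd prec side x e + Cval fst snd prec side x e) :=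
    Finset.sum_le_sum (fun e _ => hge e)
  have hsumeq : ∑ e, (x e * (x e + Aval fst snd prec side x e + Cval fst snd prec side x e)
      - x e) = 0 := by
    rw [Finset.sum_sub_distrib]
    linarith
  have hzero := (Finset.sum_eq_zero_iff_of_nonneg
    (fun e _ => by linarith [hge e])).mp hsumeq e (Finset.mem_univ e)
  have hxx : x e * (x e + Aval fst snd prec side x e + Cval fst snd prec side x e)
      = x e * 1 := by linarith
  exact mul_left_cancel₀ (ne_of_gt hpos) hxx

end KeyEq2

lemma exists_interval {α : Type} (x : α → ℝ) (r : α → α → Prop)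
    (hirr : ∀ a, ¬ r a a) (htrans : ∀ a b c, r a b → r b c → r a c) :
    ∀ (n : ℕ) (S : Finset α), S.card = n →
    (∀ a ∈ S, ∀ b ∈ S, a ≠ b → r a b ∨ r b a) → (∀ a, 0 ≤ x a) →
    ∀ θ : ℝ, 0 ≤ θ → θ < ∑ a ∈ S, x a →
    ∃ f ∈ S, (∑ g ∈ S.filter (fun g => r g f), x g) ≤ θ ∧
      θ < (∑ g ∈ S.filter (fun g => r g f), x g) + x f := by
  intro n
  induction n using Nat.strong_induction_on with
  | _ n ih =>
    intro S hcard htot hx θ hθ0 hθS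
    have hne : S.Nonempty := by
      rcases S.eq_empty_or_nonempty with h | h
      · subst h; simp at hθS; linarith
      · exact h
    obtain ⟨t, htS, htmax⟩ := S.exists_max_image (fun f => (S.filter (fun g => r f g)).card) hne
    have htop : ∀ g ∈ S, ¬ r g t := by
      intro g hgS hrg
      have hsub : insert t (S.filter (fun a => r t a)) ⊆ S.filter (fun a => r g a) := by
        intro a ha
        rcases Finset.mem_insert.mp ha with h | h
        · subst h; exact Finset.mem_filter.mpr ⟨htS, hrg⟩
        · obtain ⟨haS, hta⟩ := Finset.mem_filter.mp h
          exact Finset.mem_filter.mpr ⟨haS, htrans _ _ _ hrg hta⟩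
      have hnt : t ∉ S.filter (fun a => r t a) := by
        intro h; exact hirr t (Finset.mem_filter.mp h).2
      have := Finset.card_le_card hsub
      rw [Finset.card_insert_of_notMem hnt] at this
      have := htmax g hgS
      omega
    have hupt : S.filter (fun g => r g t) = ∅ := by
      apply Finset.filter_eq_empty_iff.mpr
      intro g hg; exact htop g hg
    by_cases hcase : θ < x t
    · exact ⟨t, htS, by rw [hupt]; simpa using hθ0, by rw [hupt]; simpa using hcase⟩
    · push_neg at hcase
      have hcard' : (S.erase t).card < n := by
        have hpos : 0 < n := hcard ▸ Finset.card_pos.mpr hne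
        rw [Finset.card_erase_of_mem htS]; omega
      have hsum' : ∑ a ∈ S.erase t, x a = (∑ a ∈ S, x a) - x t := by
        have := Finset.sum_erase_add S x htS
        linarith
      obtain ⟨f, hfS', hf1, hf2⟩ := ih (S.erase t).card hcard' (S.erase t) rfl
        (fun a ha b hb hab => htot a (Finset.mem_of_mem_erase ha) b (Finset.mem_of_mem_erase hb) hab)
        hx (θ - x t) (by linarith) (by rw [hsum']; linarith)
      have hfS : f ∈ S := Finset.mem_of_mem_erase hfS'
      have hft : f ≠ t := Finset.ne_of_mem_erase hfS'
      have hrtf : r t f := by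
        rcases htot t htS f hfS (Ne.symm hft) with h | h
        · exact h
        · exact absurd h (htop f hfS)
      have hset : S.filter (fun g => r g f) = insert t ((S.erase t).filter (fun g => r g f)) := by
        ext g
        simp only [Finset.mem_filter, Finset.mem_insert, Finset.mem_erase]
        constructor
        · rintro ⟨hgS, hgf⟩
          by_cases hgt : g = t
          · left; exact hgt
          · right; exact ⟨⟨hgt, hgS⟩, hgf⟩
        · rintro (h | ⟨⟨_, hgS⟩, hgf⟩)
          · subst h; exact ⟨htS, hrtf⟩
          · exact ⟨hgS, hgf⟩
      have hnmem : t ∉ (S.erase t).filter (fun g => r g f) := by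
        intro h
        exact (Finset.notMem_erase t S) (Finset.mem_of_mem_filter _ h)
      refine ⟨f, hfS, ?_, ?_⟩ <;> rw [hset, Finset.sum_insert hnmem] <;> linarith

lemma telescope_sum (B : Finset ℝ) (nxt : ℝ → ℝ)
    (hnxt : ∀ (t : ℝ) (h : (B.filter (fun s => t < s)).Nonempty),
      nxt t = (B.filter (fun s => t < s)).min' h) :
    ∀ (n : ℕ) (a b : ℝ), a ∈ B → b ∈ B → a ≤ b →
    (B.filter (fun t => a ≤ t ∧ t < b)).card = n →
    ∑ t ∈ B.filter (fun t => a ≤ t ∧ t < b), (nxt t - t) = b - a := by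
  intro n
  induction n using Nat.strong_induction_on with
  | _ n ih =>
    intro a b haB hbB hab hcard
    rcases eq_or_lt_of_le hab with heq | hlt
    · subst heq
      rw [Finset.filter_eq_empty_iff.mpr (by intro t _ h; exact absurd (lt_of_le_of_lt h.1 h.2) (lt_irrefl _))]
      simp
    · have hne : (B.filter (fun s => a < s)).Nonempty := ⟨b, Finset.mem_filter.mpr ⟨hbB, hlt⟩⟩
      set a' := (B.filter (fun s => a < s)).min' hne with ha'def
      have ha'mem := Finset.min'_mem _ hne
      rw [Finset.mem_filter] at ha'mem
      obtain ⟨ha'B, haa'⟩ := ha'mem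
      have ha'b : a' ≤ b := Finset.min'_le _ b (Finset.mem_filter.mpr ⟨hbB, hlt⟩)
      have hnxta : nxt a = a' := hnxt a hne
      have hsplit : B.filter (fun t => a ≤ t ∧ t < b)
          = insert a (B.filter (fun t => a' ≤ t ∧ t < b)) := by
        ext t
        simp only [Finset.mem_filter, Finset.mem_insert]
        constructor
        · rintro ⟨htB, hat, htb⟩
          rcases eq_or_lt_of_le hat with h | h
          · left; exact h.symm
          · right; exact ⟨htB, Finset.min'_le _ t (Finset.mem_filter.mpr ⟨htB, h⟩), htb⟩
        · rintro (h | ⟨htB, h1, h2⟩)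
          · rw [h]; exact ⟨haB, le_refl _, hlt⟩
          · exact ⟨htB, le_trans (le_of_lt haa') h1, h2⟩
      have hnotmem : a ∉ B.filter (fun t => a' ≤ t ∧ t < b) := by
        intro h
        have := (Finset.mem_filter.mp h).2.1
        linarith
      have hcard' : (B.filter (fun t => a' ≤ t ∧ t < b)).card < n := by
        rw [hsplit, Finset.card_insert_of_notMem hnotmem] at hcard
        omega
      have := ih _ hcard' a' b ha'B hbB ha'b rfl
      rw [hsplit, Finset.sum_insert hnotmem, hnxta, this]
      ring

section Stable
variable {V E : Type} [Fintype V] [Fintype E] (fst snd : E → V)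
  (prec : V → E → E → Prop) (side : V → Bool)

lemma Dset_step (hord : IsPrefOrder fst snd prec) (v : V) (e f : E)
    (hf : f ∈ Dset fst snd prec v e) :
    Dset fst snd prec v f = (Dset fst snd prec v e).filter (fun g => prec v g f) := by
  obtain ⟨hfe, hfv, hpf⟩ := (Dset_mem fst snd prec v e f).mp hf
  ext g
  simp only [Dset_mem, Finset.mem_filter]
  constructor
  · rintro ⟨hgf, hgv, hpg⟩
    have hge : g ≠ e := by
      intro h
      subst h
      exact hord.1 v g (hord.2.1 v g f g hpg hpf)
    exact ⟨⟨hge, hgv, hord.2.1 v g f e hpg hpf⟩, hpg⟩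
  · rintro ⟨⟨hge, hgv, hpge⟩, hpg⟩
    have hgf : g ≠ f := by
      intro h
      subst h
      exact hord.1 v g hpg
    exact ⟨hgf, hgv, hpg⟩

lemma DsetSum_mono (hord : IsPrefOrder fst snd prec) (x : E → ℝ) (hx0 : ∀ e, 0 ≤ x e)
    (v : V) (e f : E) (hf : f ∈ Dset fst snd prec v e) :
    (∑ g ∈ Dset fst snd prec v f, x g) + x f ≤ ∑ g ∈ Dset fst snd prec v e, x g := by
  have hstep := Dset_step fst snd prec hord v e f hf
  have hfn : f ∉ Dset fst snd prec v f := by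
    rw [Dset_mem]; tauto
  have hsub : insert f (Dset fst snd prec v f) ⊆ Dset fst snd prec v e := by
    intro g hg
    rcases Finset.mem_insert.mp hg with h | h
    · subst h; exact hf
    · rw [hstep] at h; exact Finset.mem_of_mem_filter _ h
  calc (∑ g ∈ Dset fst snd prec v f, x g) + x f
      = ∑ g ∈ insert f (Dset fst snd prec v f), x g := by rw [Finset.sum_insert hfn]; ring
    _ ≤ ∑ g ∈ Dset fst snd prec v e, x g :=
        Finset.sum_le_sum_of_subset_of_nonneg hsub (fun g _ _ => hx0 g)

lemma M_stable (hord : IsPrefOrder fst snd prec) (hsimple : SimpleG fst snd)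
    (hbip : ∀ e, side (fst e) ≠ side (snd e))
    (x : E → ℝ) (hx : x ∈ FSMset fst snd prec) (θ : ℝ) (hθ0 : 0 ≤ θ) (hθ1 : θ < 1) :
    IsStableMatching fst snd prec
      (Finset.univ.filter (fun e => Aval fst snd prec side x e ≤ θ
        ∧ θ < Aval fst snd prec side x e + x e)) := by
  have hx0 := hx.1
  have hdeg := hx.2.1
  have hkeyge := key_ge fst snd prec side hsimple hbip x hx
  have hkeyeq := key_eq fst snd prec side hord hsimple hbip x hx
  constructor
  · -- matching
    have hman : ∀ e f : E, ∀ v : V,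
        (Aval fst snd prec side x e ≤ θ ∧ θ < Aval fst snd prec side x e + x e) →
        (Aval fst snd prec side x f ≤ θ ∧ θ < Aval fst snd prec side x f + x f) →
        f ≠ e → Incid fst snd e v → Incid fst snd f v → prec v f e → side v = true → False := by
      intro e f v he hf hfe hev hfv hp hsv
      have hve : manV fst snd side e = v := man_eq_of_incid fst snd side hbip e v hsv hev
      have hvf : manV fst snd side f = v := man_eq_of_incid fst snd side hbip f v hsv hfv
      have hfD : f ∈ Dset fst snd prec v e := (Dset_mem fst snd prec v e f).mpr ⟨hfe, hfv, hp⟩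
      have hmono := DsetSum_mono fst snd prec hord x hx0 v e f hfD
      have hAe : Aval fst snd prec side x e = ∑ g ∈ Dset fst snd prec v e, x g := by
        rw [Aval, hve]
      have hAf : Aval fst snd prec side x f = ∑ g ∈ Dset fst snd prec v f, x g := by
        rw [Aval, hvf]
      rw [← hAe, ← hAf] at hmono
      linarith [he.1, hf.2]
    have hwom : ∀ e f : E, ∀ v : V,
        (Aval fst snd prec side x e ≤ θ ∧ θ < Aval fst snd prec side x e + x e) →
        (Aval fst snd prec side x f ≤ θ ∧ θ < Aval fst snd prec side x f + x f) →
        f ≠ e → Incid fst snd e v → Incid fst snd f v → prec v f e → side v = false → False := by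
      intro e f v he hf hfe hev hfv hp hsv
      have hve : womV fst snd side e = v := wom_eq_of_incid fst snd side hbip e v hsv hev
      have hvf : womV fst snd side f = v := wom_eq_of_incid fst snd side hbip f v hsv hfv
      have hfD : f ∈ Dset fst snd prec v e := (Dset_mem fst snd prec v e f).mpr ⟨hfe, hfv, hp⟩
      have hmono := DsetSum_mono fst snd prec hord x hx0 v e f hfD
      have hCe : Cval fst snd prec side x e = ∑ g ∈ Dset fst snd prec v e, x g := by
        rw [Cval, hve]
      have hCf : Cval fst snd prec side x f = ∑ g ∈ Dset fst snd prec v f, x g := by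
        rw [Cval, hvf]
      rw [← hCe, ← hCf] at hmono
      have hxe : 0 < x e := by linarith [he.1, he.2]
      have hxf : 0 < x f := by linarith [hf.1, hf.2]
      have hke := hkeyeq e hxe
      have hkf := hkeyeq f hxf
      linarith [he.2, hf.1]
    intro e he f hf hef v hv
    simp only [Finset.mem_filter, Finset.mem_univ, true_and] at he hf
    rcases hord.2.2 v e f hv.1 hv.2 hef with hp | hp
    · cases hsv : side v
      · exact hwom f e v hf he hef hv.2 hv.1 hp hsv
      · exact hman f e v hf he hef hv.2 hv.1 hp hsv
    · cases hsv : side v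
      · exact hwom e f v he hf (Ne.symm hef) hv.1 hv.2 hp hsv
      · exact hman e f v he hf (Ne.symm hef) hv.1 hv.2 hp hsv
  · -- stability
    intro e
    by_cases hem : e ∈ Finset.univ.filter (fun e => Aval fst snd prec side x e ≤ θ
        ∧ θ < Aval fst snd prec side x e + x e)
    · exact Or.inl hem
    right
    simp only [Finset.mem_filter, Finset.mem_univ, true_and, not_and, not_lt] at hem
    by_cases hA : Aval fst snd prec side x e ≤ θ
    · -- woman side case: θ ≥ A e + x e
      have hθe : Aval fst snd prec side x e + x e ≤ θ := hem hA
      set w := womV fst snd side e with hwdef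
      set S := Dset fst snd prec w e with hSdef
      have hCe : Cval fst snd prec side x e = ∑ g ∈ S, x g := rfl
      have hCeθ : 1 - θ ≤ ∑ g ∈ S, x g := by
        have := hkeyge e
        rw [hCe] at this
        linarith
      obtain ⟨f, hfS, h1, h2⟩ := exists_interval x (fun a b => prec w b a)
        (fun a => hord.1 w a) (fun a b c hab hbc => hord.2.1 w c b a hbc hab)
        S.card S rfl
        (fun a ha b hb hab => by
          rcases hord.2.2 w a b ((Dset_mem fst snd prec w e a).mp ha).2.1
            ((Dset_mem fst snd prec w e b).mp hb).2.1 hab with h | h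
          · exact Or.inr h
          · exact Or.inl h)
        hx0 ((∑ g ∈ S, x g) - (1 - θ)) (by linarith) (by linarith)
      obtain ⟨hfe, hfw, hpf⟩ := (Dset_mem fst snd prec w e f).mp hfS
      -- partition of S
      have hfnot : f ∉ S.filter (fun g => prec w f g) := by
        intro h
        exact hord.1 w f (Finset.mem_filter.mp h).2
      have hins : S.filter (fun g => ¬ prec w g f) = insert f (S.filter (fun g => prec w f g)) := by
        ext g
        simp only [Finset.mem_filter, Finset.mem_insert]
        constructor
        · rintro ⟨hgS, hng⟩
          by_cases hgf : g = f
          · exact Or.inl hgf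
          · right
            refine ⟨hgS, ?_⟩
            rcases hord.2.2 w g f ((Dset_mem fst snd prec w e g).mp hgS).2.1 hfw hgf with h | h
            · exact absurd h hng
            · exact h
        · rintro (h | ⟨hgS, hg⟩)
          · subst h; exact ⟨hfS, hord.1 w g⟩
          · refine ⟨hgS, fun hc => ?_⟩
            exact hord.1 w g (hord.2.1 w g f g hc hg)
      have hpart : ∑ g ∈ S, x g = (∑ g ∈ S.filter (fun g => prec w g f), x g)
          + (x f + ∑ g ∈ S.filter (fun g => prec w f g), x g) := by
        rw [← Finset.sum_filter_add_sum_filter_not S (fun g => prec w g f) x, hins,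
          Finset.sum_insert hfnot]
      have hwomf : womV fst snd side f = w :=
        wom_eq_of_incid fst snd side hbip f w (hwdef ▸ side_wom fst snd side hbip e) hfw
      have hCf : Cval fst snd prec side x f = ∑ g ∈ S.filter (fun g => prec w g f), x g := by
        rw [Cval, hwomf, Dset_step fst snd prec hord w e f hfS, hSdef]
      have hCfub : Cval fst snd prec side x f < 1 - θ := by
        rw [hCf]; linarith
      have hCflb : 1 - θ ≤ Cval fst snd prec side x f + x f := by
        rw [hCf]; linarith
      have hxf : 0 < x f := by linarith
      have hkf := hkeyeq f hxf
      refine ⟨f, Finset.mem_filter.mpr ⟨Finset.mem_univ f, by linarith, by linarith⟩,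
        ⟨w, incid_wom fst snd side e, hfw, hpf⟩⟩
    · -- man side case: θ < A e
      push_neg at hA
      set v := manV fst snd side e with hvdef
      set S := Dset fst snd prec v e with hSdef
      have hAe : Aval fst snd prec side x e = ∑ g ∈ S, x g := rfl
      obtain ⟨f, hfS, h1, h2⟩ := exists_interval x (fun a b => prec v a b)
        (fun a => hord.1 v a) (fun a b c hab hbc => hord.2.1 v a b c hab hbc)
        S.card S rfl
        (fun a ha b hb hab => hord.2.2 v a b ((Dset_mem fst snd prec v e a).mp ha).2.1
          ((Dset_mem fst snd prec v e b).mp hb).2.1 hab)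
        hx0 θ hθ0 (by rw [← hAe]; exact hA)
      obtain ⟨hfe, hfv, hpf⟩ := (Dset_mem fst snd prec v e f).mp hfS
      have hmanf : manV fst snd side f = v :=
        man_eq_of_incid fst snd side hbip f v (hvdef ▸ side_man fst snd side hbip e) hfv
      have hAf : Aval fst snd prec side x f = ∑ g ∈ S.filter (fun g => prec v g f), x g := by
        rw [Aval, hmanf, Dset_step fst snd prec hord v e f hfS, hSdef]
      refine ⟨f, Finset.mem_filter.mpr ⟨Finset.mem_univ f, by rw [hAf]; linarith,
        by rw [hAf]; linarith⟩, ⟨v, incid_man fst snd side e, hfv, hpf⟩⟩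

end Stable

section Main
variable {V E : Type} [Fintype V] [Fintype E] (fst snd : E → V)
  (prec : V → E → E → Prop) (side : V → Bool)

lemma fsm_sub_hull (hord : IsPrefOrder fst snd prec) (hsimple : SimpleG fst snd)
    (hbip : ∀ e, side (fst e) ≠ side (snd e)) :
    FSMset fst snd prec ⊆ convexHull ℝ (SMvecs fst snd prec) := by
  intro x hx
  have hx0 := hx.1
  have hdeg := hx.2.1
  set A : E → ℝ := fun e => Aval fst snd prec side x e with hAdef
  have hA0 : ∀ e, 0 ≤ A e := fun e => Aval_nonneg fst snd prec side x hx0 e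
  have hA1 : ∀ e, A e + x e ≤ 1 := fun e => Aval_deg fst snd prec side x hx0 hdeg e
  set B : Finset ℝ := insert 0 (insert 1 ((Finset.univ.image A)
      ∪ (Finset.univ.image (fun e => A e + x e)))) with hBdef
  have h0B : (0:ℝ) ∈ B := Finset.mem_insert_self _ _
  have h1B : (1:ℝ) ∈ B := by simp [hBdef]
  have hAB : ∀ e, A e ∈ B := by
    intro e
    simp only [hBdef, Finset.mem_insert, Finset.mem_union, Finset.mem_image]
    right; right; left; exact ⟨e, Finset.mem_univ e, rfl⟩
  have hAxB : ∀ e, A e + x e ∈ B := by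
    intro e
    simp only [hBdef, Finset.mem_insert, Finset.mem_union, Finset.mem_image]
    right; right; right; exact ⟨e, Finset.mem_univ e, rfl⟩
  have hB01 : ∀ t ∈ B, 0 ≤ t ∧ t ≤ 1 := by
    intro t ht
    simp only [hBdef, Finset.mem_insert, Finset.mem_union, Finset.mem_image] at ht
    rcases ht with rfl | rfl | ⟨e, _, rfl⟩ | ⟨e, _, rfl⟩
    · exact ⟨le_refl 0, zero_le_one⟩
    · exact ⟨zero_le_one, le_refl 1⟩
    · exact ⟨hA0 e, by linarith [hA1 e, hx0 e]⟩
    · exact ⟨by linarith [hA0 e, hx0 e], hA1 e⟩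
  set nxt : ℝ → ℝ := fun t => if h : (B.filter (fun s => t < s)).Nonempty
      then (B.filter (fun s => t < s)).min' h else 0 with hnxtdef
  have hnxt : ∀ (t : ℝ) (h : (B.filter (fun s => t < s)).Nonempty),
      nxt t = (B.filter (fun s => t < s)).min' h := fun t h => dif_pos h
  set I := B.filter (fun t => t < 1) with hIdef
  have hIne : ∀ t ∈ I, (B.filter (fun s => t < s)).Nonempty := by
    intro t ht
    exact ⟨1, Finset.mem_filter.mpr ⟨h1B, (Finset.mem_filter.mp ht).2⟩⟩
  have hw0 : ∀ t ∈ I, 0 ≤ nxt t - t := by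
    intro t ht
    have h := hIne t ht
    rw [hnxt t h]
    have hm := Finset.min'_mem _ h
    have := (Finset.mem_filter.mp hm).2
    linarith
  have htel := telescope_sum B nxt hnxt
  have hfilterI : ∀ (a b : ℝ), b ≤ 1 →
      I.filter (fun t => a ≤ t ∧ t < b) = B.filter (fun t => a ≤ t ∧ t < b) := by
    intro a b hb
    ext t
    simp only [hIdef, Finset.mem_filter, and_assoc]
    constructor
    · rintro ⟨h1, _, h3, h4⟩; exact ⟨h1, h3, h4⟩
    · rintro ⟨h1, h3, h4⟩; exact ⟨h1, lt_of_lt_of_le h4 hb, h3, h4⟩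
  have hcoord : ∀ e, ∑ t ∈ I.filter (fun t => A e ≤ t ∧ t < A e + x e), (nxt t - t) = x e := by
    intro e
    rw [hfilterI (A e) (A e + x e) (hA1 e),
      htel _ (A e) (A e + x e) (hAB e) (hAxB e) (by linarith [hx0 e]) rfl]
    ring
  have hsum1 : ∑ t ∈ I, (nxt t - t) = 1 := by
    have hIeq : I = B.filter (fun t => (0:ℝ) ≤ t ∧ t < 1) := by
      ext t
      simp only [hIdef, Finset.mem_filter]
      constructor
      · rintro ⟨h1, h2⟩; exact ⟨h1, (hB01 t h1).1, h2⟩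
      · rintro ⟨h1, _, h3⟩; exact ⟨h1, h3⟩
    rw [hIeq, htel _ 0 1 h0B h1B zero_le_one rfl]
    ring
  set M : ℝ → Finset E := fun θ => Finset.univ.filter (fun e => A e ≤ θ ∧ θ < A e + x e)
    with hMdef
  set vec : ℝ → (E → ℝ) := fun θ => (fun e => if e ∈ M θ then (1:ℝ) else 0) with hvecdef
  have hvec : ∀ t ∈ I, vec t ∈ SMvecs fst snd prec := by
    intro t ht
    obtain ⟨htB, ht1⟩ := Finset.mem_filter.mp ht
    exact ⟨M t, M_stable fst snd prec side hord hsimple hbip x hx t (hB01 t htB).1 ht1, rfl⟩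
  have hxdecomp : x = ∑ t ∈ I, (nxt t - t) • vec t := by
    funext e
    rw [Finset.sum_apply]
    have hterm : ∀ t ∈ I, ((nxt t - t) • vec t) e
        = (if A e ≤ t ∧ t < A e + x e then nxt t - t else 0) := by
      intro t _
      have hme : e ∈ M t ↔ (A e ≤ t ∧ t < A e + x e) := by
        rw [hMdef]; simp
      by_cases h : A e ≤ t ∧ t < A e + x e
      · rw [if_pos h]
        simp only [Pi.smul_apply, hvecdef, smul_eq_mul]
        rw [if_pos (hme.mpr h), mul_one]
      · rw [if_neg h]
        simp only [Pi.smul_apply, hvecdef, smul_eq_mul]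
        rw [if_neg (fun hc => h (hme.mp hc)), mul_zero]
    rw [Finset.sum_congr rfl hterm, ← Finset.sum_filter, hcoord e]
  rw [hxdecomp, ← Finset.centerMass_eq_of_sum_1 I vec hsum1]
  exact Finset.centerMass_mem_convexHull I hw0 (by rw [hsum1]; exact one_pos) hvec

lemma smvecs_sub : SMvecs fst snd prec ⊆ FSMset fst snd prec := by
  rintro x ⟨M, ⟨hmatch, hstab⟩, rfl⟩
  refine ⟨?_, ?_, ?_⟩
  · intro e
    by_cases h : e ∈ M <;> simp [h]
  · intro v
    have hcard : ((Finset.univ.filter (fun e => Incid fst snd e v)).filter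
        (fun e => e ∈ M)).card ≤ 1 := by
      rw [Finset.card_le_one]
      intro a ha b hb
      rw [Finset.mem_filter, Finset.mem_filter] at ha hb
      by_contra hab
      exact hmatch a ha.2 b hb.2 hab v ⟨ha.1.2, hb.1.2⟩
    calc ∑ e ∈ Finset.univ.filter (fun e => Incid fst snd e v),
          (if e ∈ M then (1:ℝ) else 0)
        = (((Finset.univ.filter (fun e => Incid fst snd e v)).filter
            (fun e => e ∈ M)).card : ℝ) := by rw [Finset.sum_boole]
      _ ≤ 1 := by exact_mod_cast hcard
  · intro e
    by_cases h : e ∈ M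
    · have hnn : 0 ≤ ∑ f ∈ Finset.univ.filter (fun f => f ≠ e ∧ Dominates fst snd prec f e),
          (if f ∈ M then (1:ℝ) else 0) :=
        Finset.sum_nonneg (fun f _ => by by_cases hf : f ∈ M <;> simp [hf])
      simp only [if_pos h]
      linarith
    · obtain ⟨f, hfM, hdom⟩ := (hstab e).resolve_left h
      have hfe : f ≠ e := fun hc => h (hc ▸ hfM)
      have hmem : f ∈ Finset.univ.filter (fun f => f ≠ e ∧ Dominates fst snd prec f e) :=
        Finset.mem_filter.mpr ⟨Finset.mem_univ f, hfe, hdom⟩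
      have hle : (1:ℝ) ≤ ∑ g ∈ Finset.univ.filter (fun f => f ≠ e ∧ Dominates fst snd prec f e),
          (if g ∈ M then (1:ℝ) else 0) := by
        have := Finset.single_le_sum (f := fun g => if g ∈ M then (1:ℝ) else 0)
          (fun g _ => by by_cases hg : g ∈ M <;> simp [hg]) hmem
        simp only [if_pos hfM] at this
        simpa using this
      simp only [if_neg h]
      linarith

lemma convex_fsm : Convex ℝ (FSMset fst snd prec) := by
  intro y hy z hz a b ha hb hab
  refine ⟨?_, ?_, ?_⟩
  · intro e
    simp only [Pi.add_apply, Pi.smul_apply, smul_eq_mul]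
    have := hy.1 e
    have := hz.1 e
    positivity
  · intro v
    simp only [Pi.add_apply, Pi.smul_apply, smul_eq_mul]
    rw [Finset.sum_add_distrib, ← Finset.mul_sum, ← Finset.mul_sum]
    have h1 := hy.2.1 v
    have h2 := hz.2.1 v
    nlinarith
  · intro e
    simp only [Pi.add_apply, Pi.smul_apply, smul_eq_mul, ge_iff_le]
    rw [Finset.sum_add_distrib, ← Finset.mul_sum, ← Finset.mul_sum]
    have h1 := hy.2.2 e
    have h2 := hz.2.2 e
    nlinarith

end Main

/-- Rothblum: for a simple bipartite preference system, the fractional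
stable matching polytope equals the convex hull of characteristic vectors of stable
matchings (in particular it has only integral vertices). -/
theorem stmt_5 {V E : Type} [Fintype V] [Fintype E] (fst snd : E → V)
    (prec : V → E → E → Prop) (hord : IsPrefOrder fst snd prec)
    (hsimple : SimpleG fst snd)
    (side : V → Bool) (hbip : ∀ e, side (fst e) ≠ side (snd e)) :
    FSMset fst snd prec = convexHull ℝ (SMvecs fst snd prec) := by
  apply Set.Subset.antisymm
  · exact fsm_sub_hull fst snd prec side hord hsimple hbip
  · exact convexHull_min (by apply smvecs_sub) (by apply convex_fsm)
end

section
/- Let (G, prec) be a simple preference system. Every vertex of the fractional stable matching polytope FSM(G, prec) is half-integral, i.e., all its coordinates lie in {0, 1/2, 1}. -/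
attribute [local instance] Classical.propDecidable

/-!
Let `x` lie in the polytope and call a vertex fractional if some edge at it has `0 < x e < 1`.
If `e` is the best positive edge at `u`, its positive dominators all sit at its other end `z`, so
its stability constraint forces `z` to be saturated with `e` the worst positive edge there.
Sending a fractional vertex to the far end of its best edge is therefore injective, hence a
bijection of the fractional vertices: each of them is saturated, and a fractional edge is best at
one end iff it is worst at the other.

So the point `halfPoint x`, which keeps the integral entries of `x` and puts `1/2` on the best and
the worst positive edge of each fractional vertex, satisfies with equality every constraint that
`x` satisfies with equality. Then `x ± t (x - halfPoint x)` stays in the polytope for small `t`,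
and an extreme point `x` equals `halfPoint x`.
-/

open Finset Filter Topology

lemma eq_zero_of_mem_extremePoints_of_eventually_mem {M : Type*} [AddCommGroup M]
    [Module ℝ M] {S : Set M} {x d : M} (hx : x ∈ S.extremePoints ℝ)
    (h : ∀ᶠ t in 𝓝 (0 : ℝ), x + t • d ∈ S) : d = 0 := by
  have hneg : ∀ᶠ t in 𝓝 (0 : ℝ), x + (-t) • d ∈ S := by
    have := tendsto_neg (0 : ℝ)
    rw [neg_zero] at this
    exact this.eventually h
  obtain ⟨t, ⟨hplus, hminus⟩, ht⟩ :=
    (((h.and hneg).filter_mono nhdsWithin_le_nhds).and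
      (self_mem_nhdsWithin : {0}ᶜ ∈ 𝓝[≠] (0 : ℝ))).exists
  have hseg : x ∈ openSegment ℝ (x + t • d) (x + (-t) • d) :=
    ⟨1 / 2, 1 / 2, by norm_num, by norm_num, by norm_num, by module⟩
  have hfix : x + t • d = x := (mem_extremePoints_iff_left.mp hx).2 _ hplus _ hminus hseg
  exact (smul_eq_zero.mp (add_eq_left.mp hfix)).resolve_left ht

lemma eventually_add_mul_le {a b c : ℝ} (hab : a ≤ b) (hc : a = b → c = 0) :
    ∀ᶠ t in 𝓝 (0 : ℝ), a + t * c ≤ b := by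
  rcases hab.lt_or_eq with hlt | heq
  · have hcont : Tendsto (fun t : ℝ => a + t * c) (𝓝 0) (𝓝 a) :=
      (by fun_prop : Continuous fun t : ℝ => a + t * c).tendsto' 0 a (by simp)
    exact (hcont.eventually (gt_mem_nhds hlt)).mono fun t ht => ht.le
  · simp [hc heq, heq]

lemma eventually_le_add_mul {a b c : ℝ} (hba : b ≤ a) (hc : a = b → c = 0) :
    ∀ᶠ t in 𝓝 (0 : ℝ), b ≤ a + t * c :=
  (eventually_add_mul_le (c := -c) (neg_le_neg hba) fun h => by simp [hc (neg_inj.mp h)]).mono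
    fun t ht => by linarith

section PreferenceSystem

variable {V E : Type} {fst snd : E → V} {prec : V → E → E → Prop} {x : E → ℝ}

lemma IsPrefOrder.asymm (hord : IsPrefOrder fst snd prec) {v : V} {e f : E} (h : prec v e f) :
    ¬ prec v f e :=
  fun h' => hord.1 v e (hord.2.1 v e f e h h')

lemma IsPrefOrder.ne (hord : IsPrefOrder fst snd prec) {v : V} {e f : E} (h : prec v e f) :
    e ≠ f := by
  rintro rfl
  exact hord.1 v e h

noncomputable def otherEnd (fst snd : E → V) (e : E) (v : V) : V :=
  if fst e = v then snd e else fst e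

lemma incid_otherEnd (e : E) (v : V) : Incid fst snd e (otherEnd fst snd e v) := by
  unfold otherEnd Incid
  split_ifs <;> simp

lemma otherEnd_ne (hsimple : SimpleG fst snd) (e : E) (v : V) : otherEnd fst snd e v ≠ v := by
  have := hsimple.1 e
  unfold otherEnd
  split_ifs <;> grind

lemma eq_or_eq_of_incid {e : E} {u z w : V} (hu : Incid fst snd e u) (hz : Incid fst snd e z)
    (huz : u ≠ z) (hw : Incid fst snd e w) : w = u ∨ w = z := by
  unfold Incid at *
  grind

lemma SimpleG.eq_of_incid (hsimple : SimpleG fst snd) {e f : E} {u z : V} (huz : u ≠ z)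
    (heu : Incid fst snd e u) (hez : Incid fst snd e z) (hfu : Incid fst snd f u)
    (hfz : Incid fst snd f z) : e = f := by
  by_contra hef
  apply hsimple.2 e f hef
  unfold Incid at *
  grind

noncomputable def incidentEdges [Fintype E] (fst snd : E → V) (v : V) : Finset E :=
  univ.filter fun e => Incid fst snd e v

noncomputable def dominators [Fintype E] (fst snd : E → V) (prec : V → E → E → Prop) (e : E) :
    Finset E :=
  univ.filter fun f => f ≠ e ∧ Dominates fst snd prec f e

noncomputable def betterAt [Fintype E] (fst snd : E → V) (prec : V → E → E → Prop) (w : V)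
    (g : E) : Finset E :=
  univ.filter fun f => Incid fst snd f w ∧ f ≠ g ∧ prec w f g

lemma mem_incidentEdges [Fintype E] {v : V} {e : E} :
    e ∈ incidentEdges fst snd v ↔ Incid fst snd e v := by
  simp [incidentEdges]

lemma mem_dominators [Fintype E] {e f : E} :
    f ∈ dominators fst snd prec e ↔ f ≠ e ∧ Dominates fst snd prec f e := by
  simp [dominators]

lemma mem_betterAt [Fintype E] {w : V} {f g : E} :
    f ∈ betterAt fst snd prec w g ↔ Incid fst snd f w ∧ f ≠ g ∧ prec w f g := by
  simp [betterAt]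

lemma mem_FSMset_iff [Fintype V] [Fintype E] :
    x ∈ FSMset fst snd prec ↔ (∀ e, 0 ≤ x e) ∧
      (∀ v, ∑ e ∈ incidentEdges fst snd v, x e ≤ 1) ∧
      (∀ e, 1 ≤ x e + ∑ f ∈ dominators fst snd prec e, x f) :=
  Iff.rfl

lemma eventually_add_smul_mem_FSMset [Fintype V] [Fintype E] {d : E → ℝ}
    (hx : x ∈ FSMset fst snd prec) (hzero : ∀ e, x e = 0 → d e = 0)
    (hdeg : ∀ v, ∑ e ∈ incidentEdges fst snd v, x e = 1 →
      ∑ e ∈ incidentEdges fst snd v, d e = 0)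
    (hstab : ∀ e, x e + ∑ f ∈ dominators fst snd prec e, x f = 1 →
      d e + ∑ f ∈ dominators fst snd prec e, d f = 0) :
    ∀ᶠ t in 𝓝 (0 : ℝ), x + t • d ∈ FSMset fst snd prec := by
  obtain ⟨hx0, hxdeg, hxstab⟩ := mem_FSMset_iff.mp hx
  have h0 := eventually_all.mpr fun e => eventually_le_add_mul (hx0 e) (hzero e)
  have h1 := eventually_all.mpr fun v => eventually_add_mul_le (hxdeg v) (hdeg v)
  have h2 := eventually_all.mpr fun e => eventually_le_add_mul (hxstab e) (hstab e)
  filter_upwards [h0, h1, h2] with t ht0 ht1 ht2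
  simp only [mem_FSMset_iff, Pi.add_apply, Pi.smul_apply, smul_eq_mul, sum_add_distrib,
    ← mul_sum]
  exact ⟨ht0, ht1, fun e => (ht2 e).trans_eq (by ring)⟩

lemma sum_dominators_eq [Fintype E] (hsimple : SimpleG fst snd) {g : E} {u z : V}
    (hu : Incid fst snd g u) (hz : Incid fst snd g z) (huz : u ≠ z) (h : E → ℝ) :
    ∑ f ∈ dominators fst snd prec g, h f =
      ∑ f ∈ betterAt fst snd prec u g, h f + ∑ f ∈ betterAt fst snd prec z g, h f := by
  have hunion :
      dominators fst snd prec g = betterAt fst snd prec u g ∪ betterAt fst snd prec z g := by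
    ext f
    simp only [mem_dominators, Dominates, mem_union, mem_betterAt]
    constructor
    · rintro ⟨hfg, w, hgw, hfw, hp⟩
      rcases eq_or_eq_of_incid hu hz huz hgw with rfl | rfl
      exacts [Or.inl ⟨hfw, hfg, hp⟩, Or.inr ⟨hfw, hfg, hp⟩]
    · rintro (⟨hfw, hfg, hp⟩ | ⟨hfw, hfg, hp⟩)
      exacts [⟨hfg, u, hu, hfw, hp⟩, ⟨hfg, z, hz, hfw, hp⟩]
  have hdisj : Disjoint (betterAt fst snd prec u g) (betterAt fst snd prec z g) := by
    refine disjoint_left.mpr fun f hfu hfz => ?_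
    rw [mem_betterAt] at hfu hfz
    exact hfu.2.1 (hsimple.eq_of_incid huz hu hz hfu.1 hfz.1).symm
  rw [hunion, sum_union hdisj]

lemma sum_le_one_of_forall_incid [Fintype V] [Fintype E] (hx : x ∈ FSMset fst snd prec)
    {v : V} {S : Finset E} (hS : ∀ f ∈ S, Incid fst snd f v) : ∑ f ∈ S, x f ≤ 1 :=
  (sum_le_sum_of_subset_of_nonneg (fun f hf => mem_incidentEdges.mpr (hS f hf))
    fun f _ _ => hx.1 f).trans (hx.2.1 v)

lemma le_one_of_mem_FSMset [Fintype V] [Fintype E] (hx : x ∈ FSMset fst snd prec) (e : E) :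
    x e ≤ 1 := by
  simpa using sum_le_one_of_forall_incid hx (S := {e}) (v := fst e) (by simp [Incid])

noncomputable def fracVertices [Fintype V] (fst snd : E → V) (x : E → ℝ) : Finset V :=
  univ.filter fun v => ∃ e, Incid fst snd e v ∧ x e ∈ Set.Ioo 0 1

lemma mem_fracVertices [Fintype V] {v : V} :
    v ∈ fracVertices fst snd x ↔ ∃ e, Incid fst snd e v ∧ x e ∈ Set.Ioo 0 1 := by
  simp [fracVertices]

lemma mem_Ioo_of_mem_fracVertices [Fintype V] [Fintype E] (hx : x ∈ FSMset fst snd prec)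
    {v : V} (hv : v ∈ fracVertices fst snd x) {f : E} (hf : Incid fst snd f v)
    (hpos : 0 < x f) : x f ∈ Set.Ioo 0 1 := by
  obtain ⟨e, he, hfrac⟩ := mem_fracVertices.mp hv
  refine ⟨hpos, ?_⟩
  rcases eq_or_ne f e with rfl | hfe
  · exact hfrac.2
  · have := sum_le_one_of_forall_incid hx (v := v) (S := {f, e}) (by simp [hf, he])
    rw [sum_pair hfe] at this
    linarith [hfrac.1]

def IsBest (fst snd : E → V) (prec : V → E → E → Prop) (x : E → ℝ) (v : V) (e : E) : Prop :=
  Incid fst snd e v ∧ 0 < x e ∧ ∀ f, Incid fst snd f v → 0 < x f → f ≠ e → prec v e f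

def IsWorst (fst snd : E → V) (prec : V → E → E → Prop) (x : E → ℝ) (v : V) (e : E) : Prop :=
  Incid fst snd e v ∧ 0 < x e ∧ ∀ f, Incid fst snd f v → 0 < x f → f ≠ e → prec v f e

lemma IsBest.unique (hord : IsPrefOrder fst snd prec) {v : V} {e e' : E}
    (h : IsBest fst snd prec x v e) (h' : IsBest fst snd prec x v e') : e = e' := by
  by_contra hne
  exact hord.asymm (h.2.2 e' h'.1 h'.2.1 (Ne.symm hne)) (h'.2.2 e h.1 h.2.1 hne)

lemma IsWorst.unique (hord : IsPrefOrder fst snd prec) {v : V} {e e' : E}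
    (h : IsWorst fst snd prec x v e) (h' : IsWorst fst snd prec x v e') : e = e' := by
  by_contra hne
  exact hord.asymm (h'.2.2 e h.1 h.2.1 hne) (h.2.2 e' h'.1 h'.2.1 (Ne.symm hne))

lemma exists_isBest [Finite E] (hord : IsPrefOrder fst snd prec) {v : V}
    (h : ∃ e, Incid fst snd e v ∧ 0 < x e) : ∃ e, IsBest fst snd prec x v e := by
  have : IsTrans E (prec v) := ⟨hord.2.1 v⟩
  have : Std.Irrefl (prec v) := ⟨hord.1 v⟩
  obtain ⟨e, ⟨hev, hxe⟩, hmin⟩ :=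
    (Finite.wellFounded_of_trans_of_irrefl (prec v)).has_min {e | Incid fst snd e v ∧ 0 < x e} h
  exact ⟨e, hev, hxe, fun f hfv hxf hfe =>
    (hord.2.2 v e f hev hfv hfe.symm).resolve_right (hmin f ⟨hfv, hxf⟩)⟩

lemma exists_isBest_of_mem_fracVertices [Fintype V] [Finite E]
    (hord : IsPrefOrder fst snd prec) {v : V} (hv : v ∈ fracVertices fst snd x) :
    ∃ b, IsBest fst snd prec x v b := by
  obtain ⟨e, he, hfrac⟩ := mem_fracVertices.mp hv
  exact exists_isBest hord ⟨e, he, hfrac.1⟩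

lemma IsBest.sum_betterAt_eq_zero [Fintype V] [Fintype E] (hx : x ∈ FSMset fst snd prec)
    (hord : IsPrefOrder fst snd prec) {u : V} {e : E} (hb : IsBest fst snd prec x u e) :
    ∑ f ∈ betterAt fst snd prec u e, x f = 0 := by
  refine sum_eq_zero fun f hf => ?_
  obtain ⟨hfu, hfe, hp⟩ := mem_betterAt.mp hf
  by_contra hne
  exact hord.asymm hp (hb.2.2 f hfu ((hx.1 f).lt_of_ne' hne) hfe)

lemma IsBest.sum_eq_one_and_isWorst [Fintype V] [Fintype E] (hx : x ∈ FSMset fst snd prec)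
    (hord : IsPrefOrder fst snd prec) (hsimple : SimpleG fst snd) {u z : V} {e : E}
    (hb : IsBest fst snd prec x u e) (hz : Incid fst snd e z) (hzu : z ≠ u) :
    ∑ f ∈ incidentEdges fst snd z, x f = 1 ∧ IsWorst fst snd prec x z e := by
  have hrow := (mem_FSMset_iff.mp hx).2.2 e
  rw [sum_dominators_eq hsimple hb.1 hz hzu.symm, hb.sum_betterAt_eq_zero hx hord,
    zero_add] at hrow
  have hsub : insert e (betterAt fst snd prec z e) ⊆ incidentEdges fst snd z := by
    intro f hf
    rcases mem_insert.mp hf with rfl | hf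
    exacts [mem_incidentEdges.mpr hz, mem_incidentEdges.mpr (mem_betterAt.mp hf).1]
  have hins : ∑ f ∈ insert e (betterAt fst snd prec z e), x f =
      x e + ∑ f ∈ betterAt fst snd prec z e, x f :=
    sum_insert fun h => (mem_betterAt.mp h).2.1 rfl
  have hle := sum_le_sum_of_subset_of_nonneg hsub fun f _ _ => hx.1 f
  have hdeg := (mem_FSMset_iff.mp hx).2.1 z
  refine ⟨by linarith, hz, hb.2.1, fun f hfz hpos hfe => ?_⟩
  by_contra hnot
  have hlt := sum_lt_sum_of_subset hsub (mem_incidentEdges.mpr hfz)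
    (by simp [hfe, mem_betterAt, hnot]) hpos fun f _ _ => hx.1 f
  linarith

lemma exists_isBest_at_otherEnd [Fintype V] [Fintype E] (hx : x ∈ FSMset fst snd prec)
    (hord : IsPrefOrder fst snd prec) (hsimple : SimpleG fst snd) {v : V}
    (hv : v ∈ fracVertices fst snd x) :
    ∃ u e, u ≠ v ∧ Incid fst snd e v ∧ IsBest fst snd prec x u e := by
  have hbest : ∀ u ∈ fracVertices fst snd x,
      ∃ e, IsBest fst snd prec x u e ∧ x e ∈ Set.Ioo 0 1 := by
    intro u hu
    obtain ⟨b, hb⟩ := exists_isBest_of_mem_fracVertices hord hu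
    exact ⟨b, hb, mem_Ioo_of_mem_fracVertices hx hu hb.1 hb.2.1⟩
  have : Nonempty E := ⟨(mem_fracVertices.mp hv).choose⟩
  choose! b hb hbfrac using hbest
  have hworst : ∀ u ∈ fracVertices fst snd x,
      IsWorst fst snd prec x (otherEnd fst snd (b u) u) (b u) := fun u hu =>
    ((hb u hu).sum_eq_one_and_isWorst hx hord hsimple (incid_otherEnd _ _)
      (otherEnd_ne hsimple _ _)).2
  have hmaps : Set.MapsTo (fun u => otherEnd fst snd (b u) u) (fracVertices fst snd x)
      (fracVertices fst snd x) := fun u hu =>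
    mem_fracVertices.mpr ⟨b u, incid_otherEnd _ _, hbfrac u hu⟩
  have hinj : Set.InjOn (fun u => otherEnd fst snd (b u) u) (fracVertices fst snd x) := by
    intro u hu u' hu' (heq : otherEnd fst snd (b u) u = otherEnd fst snd (b u') u')
    have hbb : b u = b u' := (hworst u hu).unique hord (heq ▸ hworst u' hu')
    rcases eq_or_eq_of_incid (hb u hu).1 (incid_otherEnd _ _) (otherEnd_ne hsimple _ _).symm
      (hbb ▸ (hb u' hu').1) with h | h
    · exact h.symm
    · exact absurd (h.trans heq).symm (otherEnd_ne hsimple _ _)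
  obtain ⟨u, hu, rfl⟩ := surjOn_of_injOn_of_card_le _ hmaps hinj le_rfl hv
  exact ⟨u, b u, (otherEnd_ne hsimple _ _).symm, incid_otherEnd _ _, hb u hu⟩

lemma sum_incidentEdges_eq_one_of_mem_fracVertices [Fintype V] [Fintype E]
    (hx : x ∈ FSMset fst snd prec) (hord : IsPrefOrder fst snd prec) (hsimple : SimpleG fst snd)
    {v : V} (hv : v ∈ fracVertices fst snd x) : ∑ f ∈ incidentEdges fst snd v, x f = 1 := by
  obtain ⟨u, e, huv, hev, hb⟩ := exists_isBest_at_otherEnd hx hord hsimple hv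
  exact (hb.sum_eq_one_and_isWorst hx hord hsimple hev huv.symm).1

lemma exists_isWorst_of_mem_fracVertices [Fintype V] [Fintype E]
    (hx : x ∈ FSMset fst snd prec) (hord : IsPrefOrder fst snd prec) (hsimple : SimpleG fst snd)
    {v : V} (hv : v ∈ fracVertices fst snd x) : ∃ e, IsWorst fst snd prec x v e := by
  obtain ⟨u, e, huv, hev, hb⟩ := exists_isBest_at_otherEnd hx hord hsimple hv
  exact ⟨e, (hb.sum_eq_one_and_isWorst hx hord hsimple hev huv.symm).2⟩

lemma IsWorst.exists_isBest [Fintype V] [Fintype E] (hx : x ∈ FSMset fst snd prec)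
    (hord : IsPrefOrder fst snd prec) (hsimple : SimpleG fst snd) {v : V} {e : E}
    (hv : v ∈ fracVertices fst snd x) (hw : IsWorst fst snd prec x v e) :
    ∃ u, IsBest fst snd prec x u e := by
  obtain ⟨u, e', huv, hev, hb⟩ := exists_isBest_at_otherEnd hx hord hsimple hv
  obtain rfl := hw.unique hord (hb.sum_eq_one_and_isWorst hx hord hsimple hev huv.symm).2
  exact ⟨u, hb⟩

lemma IsBest.ne_of_isWorst [Fintype V] [Fintype E] (hx : x ∈ FSMset fst snd prec)
    (hord : IsPrefOrder fst snd prec) (hsimple : SimpleG fst snd) {v : V} {b w : E}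
    (hv : v ∈ fracVertices fst snd x) (hb : IsBest fst snd prec x v b)
    (hw : IsWorst fst snd prec x v w) : b ≠ w := by
  rintro rfl
  have hsum : ∑ f ∈ incidentEdges fst snd v, x f = x b := by
    refine sum_eq_single_of_mem b (mem_incidentEdges.mpr hb.1) fun f hf hfb => ?_
    by_contra hne
    have hpos := (hx.1 f).lt_of_ne' hne
    exact hord.asymm (hb.2.2 f (mem_incidentEdges.mp hf) hpos hfb)
      (hw.2.2 f (mem_incidentEdges.mp hf) hpos hfb)
  have := (mem_Ioo_of_mem_fracVertices hx hv hb.1 hb.2.1).2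
  linarith [sum_incidentEdges_eq_one_of_mem_fracVertices hx hord hsimple hv]

noncomputable def halfPoint (fst snd : E → V) (prec : V → E → E → Prop) (x : E → ℝ) (e : E) :
    ℝ :=
  if x e ∈ Set.Ioo 0 1 then (if ∃ v, IsBest fst snd prec x v e then 1 / 2 else 0) else x e

lemma halfPoint_of_notMem_Ioo {e : E} (h : x e ∉ Set.Ioo 0 1) :
    halfPoint fst snd prec x e = x e :=
  if_neg h

lemma halfPoint_eq_zero {e : E} (h : x e = 0) : halfPoint fst snd prec x e = 0 := by
  rw [halfPoint_of_notMem_Ioo (by simp [h]), h]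

lemma halfPoint_eq_zero_or_eq_half_or_eq_one [Fintype V] [Fintype E]
    (hx : x ∈ FSMset fst snd prec) (e : E) :
    halfPoint fst snd prec x e = 0 ∨ halfPoint fst snd prec x e = 1 / 2 ∨
      halfPoint fst snd prec x e = 1 := by
  unfold halfPoint
  split_ifs with hfrac
  · exact Or.inr (Or.inl rfl)
  · exact Or.inl rfl
  · rcases (hx.1 e).eq_or_lt with h0 | hpos
    · exact Or.inl h0.symm
    · exact Or.inr (Or.inr ((le_one_of_mem_FSMset hx e).eq_of_not_lt fun h => hfrac ⟨hpos, h⟩))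

lemma halfPoint_of_incid [Fintype V] [Fintype E] (hx : x ∈ FSMset fst snd prec)
    (hord : IsPrefOrder fst snd prec) (hsimple : SimpleG fst snd) {v : V} {f : E}
    (hv : v ∈ fracVertices fst snd x) (hf : Incid fst snd f v) (hpos : 0 < x f) :
    halfPoint fst snd prec x f =
      if IsBest fst snd prec x v f ∨ IsWorst fst snd prec x v f then 1 / 2 else 0 := by
  have hiff : (∃ w, IsBest fst snd prec x w f) ↔
      IsBest fst snd prec x v f ∨ IsWorst fst snd prec x v f := by
    constructor
    · rintro ⟨w, hw⟩
      by_cases hwv : w = v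
      · exact Or.inl (hwv ▸ hw)
      · exact Or.inr (hw.sum_eq_one_and_isWorst hx hord hsimple hf (Ne.symm hwv)).2
    · rintro (hb | hw)
      exacts [⟨v, hb⟩, hw.exists_isBest hx hord hsimple hv]
  rw [halfPoint, if_pos (mem_Ioo_of_mem_fracVertices hx hv hf hpos)]
  simp only [hiff]

lemma sum_halfPoint_of_mem_fracVertices [Fintype V] [Fintype E] (hx : x ∈ FSMset fst snd prec)
    (hord : IsPrefOrder fst snd prec) (hsimple : SimpleG fst snd) {v : V} {b w : E}
    (hv : v ∈ fracVertices fst snd x) (hb : IsBest fst snd prec x v b)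
    (hw : IsWorst fst snd prec x v w) {S : Finset E} (hS : ∀ f ∈ S, Incid fst snd f v) :
    ∑ f ∈ S, halfPoint fst snd prec x f =
      (if b ∈ S then 1 / 2 else 0) + (if w ∈ S then 1 / 2 else 0) := by
  have hbw := hb.ne_of_isWorst hx hord hsimple hv hw
  rw [← sum_ite_eq' S b fun _ => (1 / 2 : ℝ), ← sum_ite_eq' S w fun _ => (1 / 2 : ℝ),
    ← sum_add_distrib]
  refine sum_congr rfl fun f hf => ?_
  rcases (hx.1 f).eq_or_lt with h0 | hpos
  · have hfb : f ≠ b := by rintro rfl; linarith [hb.2.1]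
    have hfw : f ≠ w := by rintro rfl; linarith [hw.2.1]
    simp [halfPoint_eq_zero h0.symm, hfb, hfw]
  · have hB : IsBest fst snd prec x v f ↔ f = b := ⟨fun h => h.unique hord hb, fun h => h ▸ hb⟩
    have hW : IsWorst fst snd prec x v f ↔ f = w := ⟨fun h => h.unique hord hw, fun h => h ▸ hw⟩
    rw [halfPoint_of_incid hx hord hsimple hv (hS f hf) hpos]
    simp only [hB, hW]
    split_ifs <;> simp_all

lemma sum_halfPoint_of_notMem_fracVertices [Fintype V] {v : V}
    (hv : v ∉ fracVertices fst snd x) {S : Finset E} (hS : ∀ f ∈ S, Incid fst snd f v) :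
    ∑ f ∈ S, halfPoint fst snd prec x f = ∑ f ∈ S, x f :=
  sum_congr rfl fun f hf =>
    halfPoint_of_notMem_Ioo fun h => hv (mem_fracVertices.mpr ⟨f, hS f hf, h⟩)

lemma sum_eq_zero_or_one_of_notMem_fracVertices [Fintype V] [Fintype E]
    (hx : x ∈ FSMset fst snd prec) {v : V} (hv : v ∉ fracVertices fst snd x) {S : Finset E}
    (hS : ∀ f ∈ S, Incid fst snd f v) : ∑ f ∈ S, x f = 0 ∨ ∑ f ∈ S, x f = 1 := by
  by_cases h : ∃ f ∈ S, x f = 1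
  · obtain ⟨f, hf, h1⟩ := h
    exact Or.inr ((sum_le_one_of_forall_incid hx hS).antisymm
      (h1 ▸ single_le_sum (fun g _ => hx.1 g) hf))
  · refine Or.inl (sum_eq_zero fun f hf => ?_)
    by_contra hne
    exact hv (mem_fracVertices.mpr ⟨f, hS f hf, (hx.1 f).lt_of_ne' hne,
      (le_one_of_mem_FSMset hx f).lt_of_ne fun h1 => h ⟨f, hf, h1⟩⟩)

noncomputable def halfRound (t : ℝ) : ℝ :=
  if t = 0 then 0 else if t = 1 then 1 else 1 / 2

lemma halfRound_zero : halfRound 0 = 0 := if_pos rfl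

lemma halfRound_one : halfRound 1 = 1 := by simp [halfRound]

lemma halfRound_of_mem_Ioo {t : ℝ} (ht : t ∈ Set.Ioo 0 1) : halfRound t = 1 / 2 := by
  rw [halfRound, if_neg ht.1.ne', if_neg ht.2.ne]

lemma halfRound_add_halfRound {a b : ℝ} (hab : a + b = 1) : halfRound a + halfRound b = 1 := by
  unfold halfRound
  split_ifs <;> grind

lemma IsBest.mem_betterAt_of_mem [Fintype E] (hord : IsPrefOrder fst snd prec) {w : V}
    {b f g : E} (hb : IsBest fst snd prec x w b) (hf : f ∈ betterAt fst snd prec w g)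
    (hpos : 0 < x f) : b ∈ betterAt fst snd prec w g := by
  obtain ⟨hfw, -, hfg⟩ := mem_betterAt.mp hf
  have hbg : prec w b g := by
    rcases eq_or_ne f b with rfl | hfb
    exacts [hfg, hord.2.1 w b f g (hb.2.2 f hfw hpos hfb) hfg]
  exact mem_betterAt.mpr ⟨hb.1, hord.ne hbg, hbg⟩

lemma IsWorst.mem_betterAt_of_incid [Fintype E] (hord : IsPrefOrder fst snd prec) {w : V}
    {o f g : E} (ho : IsWorst fst snd prec x w o) (hoA : o ∈ betterAt fst snd prec w g)
    (hfw : Incid fst snd f w) (hpos : 0 < x f) : f ∈ betterAt fst snd prec w g := by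
  obtain ⟨-, -, hog⟩ := mem_betterAt.mp hoA
  have hfg : prec w f g := by
    rcases eq_or_ne f o with rfl | hfo
    exacts [hog, hord.2.1 w f o g (ho.2.2 f hfw hpos hfo) hog]
  exact mem_betterAt.mpr ⟨hfw, hord.ne hfg, hfg⟩

lemma sum_betterAt_pos [Fintype V] [Fintype E] (hx : x ∈ FSMset fst snd prec)
    (hord : IsPrefOrder fst snd prec) {w : V} {g : E} (hg : Incid fst snd g w)
    (hpos : 0 < x g) (hnb : ¬ IsBest fst snd prec x w g) :
    0 < ∑ f ∈ betterAt fst snd prec w g, x f := by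
  obtain ⟨b, hb⟩ := exists_isBest hord ⟨g, hg, hpos⟩
  have hbg : b ≠ g := fun h => hnb (h ▸ hb)
  have hbA : b ∈ betterAt fst snd prec w g :=
    mem_betterAt.mpr ⟨hb.1, hbg, hb.2.2 g hg hpos hbg.symm⟩
  exact hb.2.1.trans_le (single_le_sum (fun f _ => hx.1 f) hbA)

/-- At a fractional vertex the edges preferred to `g` form an initial segment of the positive
edges: it contains neither the best nor the worst positive edge (`x`-mass `0`), only the best
(`x`-mass strictly between `0` and `1`), or both (`x`-mass `1`). -/
lemma sum_betterAt_halfPoint [Fintype V] [Fintype E] (hx : x ∈ FSMset fst snd prec)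
    (hord : IsPrefOrder fst snd prec) (hsimple : SimpleG fst snd) (w : V) (g : E) :
    ∑ f ∈ betterAt fst snd prec w g, halfPoint fst snd prec x f =
      halfRound (∑ f ∈ betterAt fst snd prec w g, x f) := by
  have hS : ∀ f ∈ betterAt fst snd prec w g, Incid fst snd f w :=
    fun f hf => (mem_betterAt.mp hf).1
  by_cases hv : w ∉ fracVertices fst snd x
  · rw [sum_halfPoint_of_notMem_fracVertices hv hS]
    rcases sum_eq_zero_or_one_of_notMem_fracVertices hx hv hS with h | h <;> simp [h, halfRound]
  rw [not_not] at hv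
  obtain ⟨b, hb⟩ := exists_isBest_of_mem_fracVertices hord hv
  obtain ⟨o, ho⟩ := exists_isWorst_of_mem_fracVertices hx hord hsimple hv
  have hdeg := sum_incidentEdges_eq_one_of_mem_fracVertices hx hord hsimple hv
  rw [sum_halfPoint_of_mem_fracVertices hx hord hsimple hv hb ho hS]
  by_cases hoA : o ∈ betterAt fst snd prec w g
  · have hX : ∑ f ∈ betterAt fst snd prec w g, x f = 1 := by
      rw [← hdeg]
      refine sum_subset (fun f hf => mem_incidentEdges.mpr (hS f hf)) fun f hf hfA => ?_
      by_contra hne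
      exact hfA (ho.mem_betterAt_of_incid hord hoA (mem_incidentEdges.mp hf)
        ((hx.1 f).lt_of_ne' hne))
    rw [if_pos (hb.mem_betterAt_of_mem hord hoA ho.2.1), if_pos hoA, hX, halfRound_one]
    norm_num
  by_cases hbA : b ∈ betterAt fst snd prec w g
  · have hpos := hb.2.1.trans_le (single_le_sum (fun f _ => hx.1 f) hbA)
    have hsub : betterAt fst snd prec w g ⊆ (incidentEdges fst snd w).erase o :=
      fun f hf => mem_erase.mpr ⟨fun h => hoA (h ▸ hf), mem_incidentEdges.mpr (hS f hf)⟩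
    have hle := sum_le_sum_of_subset_of_nonneg hsub fun f _ _ => hx.1 f
    rw [sum_erase_eq_sub (mem_incidentEdges.mpr ho.1), hdeg] at hle
    rw [if_pos hbA, if_neg hoA, halfRound_of_mem_Ioo ⟨hpos, by linarith [ho.2.1]⟩]
    norm_num
  · have hX : ∑ f ∈ betterAt fst snd prec w g, x f = 0 := sum_eq_zero fun f hf => by
      by_contra hne
      exact hbA (hb.mem_betterAt_of_mem hord hf ((hx.1 f).lt_of_ne' hne))
    rw [if_neg hbA, if_neg hoA, hX, halfRound_zero]
    norm_num

lemma sum_incidentEdges_halfPoint_eq_one [Fintype V] [Fintype E]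
    (hx : x ∈ FSMset fst snd prec) (hord : IsPrefOrder fst snd prec) (hsimple : SimpleG fst snd)
    {v : V} (ht : ∑ f ∈ incidentEdges fst snd v, x f = 1) :
    ∑ f ∈ incidentEdges fst snd v, halfPoint fst snd prec x f = 1 := by
  have hS : ∀ f ∈ incidentEdges fst snd v, Incid fst snd f v :=
    fun f hf => mem_incidentEdges.mp hf
  by_cases hv : v ∈ fracVertices fst snd x
  · obtain ⟨b, hb⟩ := exists_isBest_of_mem_fracVertices hord hv
    obtain ⟨o, ho⟩ := exists_isWorst_of_mem_fracVertices hx hord hsimple hv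
    rw [sum_halfPoint_of_mem_fracVertices hx hord hsimple hv hb ho hS,
      if_pos (mem_incidentEdges.mpr hb.1), if_pos (mem_incidentEdges.mpr ho.1)]
    norm_num
  · rwa [sum_halfPoint_of_notMem_fracVertices hv hS]

lemma halfPoint_add_sum_dominators_eq_one [Fintype V] [Fintype E]
    (hx : x ∈ FSMset fst snd prec) (hord : IsPrefOrder fst snd prec) (hsimple : SimpleG fst snd)
    {g : E} (ht : x g + ∑ f ∈ dominators fst snd prec g, x f = 1) :
    halfPoint fst snd prec x g + ∑ f ∈ dominators fst snd prec g, halfPoint fst snd prec x f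
      = 1 := by
  set q := otherEnd fst snd g (fst g)
  have hp : Incid fst snd g (fst g) := Or.inl rfl
  have hsplit : ∀ w, Incid fst snd g w → ∀ h : E → ℝ, ∑ f ∈ dominators fst snd prec g, h f =
      ∑ f ∈ betterAt fst snd prec w g, h f +
        ∑ f ∈ betterAt fst snd prec (otherEnd fst snd g w) g, h f :=
    fun w hw => sum_dominators_eq hsimple hw (incid_otherEnd g w) (otherEnd_ne hsimple g w).symm
  have hX : ∀ w, 0 ≤ ∑ f ∈ betterAt fst snd prec w g, x f :=
    fun w => sum_nonneg fun f _ => hx.1 f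
  have hr := fun w => sum_betterAt_halfPoint hx hord hsimple w g
  rcases (hx.1 g).eq_or_lt with hg0 | hgpos
  · rw [hsplit _ hp] at ht ⊢
    rw [halfPoint_eq_zero hg0.symm, hr, hr, zero_add]
    exact halfRound_add_halfRound (by linarith)
  rcases (le_one_of_mem_FSMset hx g).eq_or_lt with hg1 | hglt
  · rw [hsplit _ hp] at ht ⊢
    have hp0 : ∑ f ∈ betterAt fst snd prec (fst g) g, x f = 0 := by linarith [hX (fst g), hX q]
    have hq0 : ∑ f ∈ betterAt fst snd prec q g, x f = 0 := by linarith [hX (fst g), hX q]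
    rw [halfPoint_of_notMem_Ioo (by simp [hg1]), hr, hr, hg1, hp0, hq0, halfRound_zero]
    norm_num
  by_cases hB : ∃ w, IsBest fst snd prec x w g
  · obtain ⟨w, hw⟩ := hB
    rw [hsplit _ hw.1] at ht ⊢
    rw [hw.sum_betterAt_eq_zero hx hord] at ht
    rw [halfPoint, if_pos ⟨hgpos, hglt⟩, if_pos ⟨w, hw⟩, hr, hr, hw.sum_betterAt_eq_zero hx hord,
      halfRound_zero, halfRound_of_mem_Ioo ⟨by linarith, by linarith⟩]
    norm_num
  · have hpos := fun w hw => sum_betterAt_pos hx hord hw hgpos fun h => hB ⟨w, h⟩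
    rw [hsplit _ hp] at ht ⊢
    rw [halfPoint, if_pos ⟨hgpos, hglt⟩, if_neg hB, hr, hr,
      halfRound_of_mem_Ioo ⟨hpos _ hp, by linarith [hX q]⟩,
      halfRound_of_mem_Ioo ⟨hpos _ (incid_otherEnd g _), by linarith [hX (fst g)]⟩]
    norm_num

end PreferenceSystem

/-- Abeledo–Rothblum: every vertex (extreme point) of the fractional stable
matching polytope of a simple preference system is half-integral. -/
theorem stmt_6 {V E : Type} [Fintype V] [Fintype E] (fst snd : E → V)
    (prec : V → E → E → Prop) (hord : IsPrefOrder fst snd prec)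
    (hsimple : SimpleG fst snd) :
    ∀ x ∈ Set.extremePoints ℝ (FSMset fst snd prec),
      ∀ e, x e = 0 ∨ x e = 1 / 2 ∨ x e = 1 := by
  intro x hx e
  have hfix : x - halfPoint fst snd prec x = 0 := by
    refine eq_zero_of_mem_extremePoints_of_eventually_mem hx
      (eventually_add_smul_mem_FSMset hx.1 (fun f hf => ?_) (fun v hv => ?_) fun f hf => ?_)
    · simp [hf, halfPoint_eq_zero hf]
    · simp [sum_sub_distrib, hv, sum_incidentEdges_halfPoint_eq_one hx.1 hord hsimple hv]
    · simp only [Pi.sub_apply, sum_sub_distrib]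
      linarith [halfPoint_add_sum_dominators_eq_one hx.1 hord hsimple hf]
  rw [sub_eq_zero.mp hfix]
  exact halfPoint_eq_zero_or_eq_half_or_eq_one hx.1 e
end

section
/- Let (G, prec) be a simple preference system, let x be a half-integral point of FSM(G, prec), let C be a cycle with cyclic preferences contained in E_{1/2}(x) with edges labeled e_1, ..., e_l so that e_k prec e_{k+1} at their common vertex, and let e be a chord of C with x(phi(e)) = 1. If (G, prec) admits no odd cycle with cyclic preferences, then the two edges of C that dominate e have indices of different parity. -/
attribute [local instance] Classical.propDecidable

section AuxLemmas

variable {V E : Type}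

lemma joins_symm {fst snd : E → V} {e : E} {u w : V}
    (h : Joins fst snd e u w) : Joins fst snd e w u := by
  unfold Joins at *; tauto

lemma val_sub_one_parity {n : ℕ} [NeZero n] (heven : Even n) (a : ZMod n) :
    (a - 1).val % 2 ≠ a.val % 2 := by
  have hn0 : 0 < n := Nat.pos_of_ne_zero (NeZero.ne n)
  obtain ⟨t, ht⟩ := heven
  have hn2 : 2 ≤ n := by omega
  have h1 : (a - 1) + 1 = a := sub_add_cancel a 1
  have hv : ((a - 1) + 1).val = ((a - 1).val + (1 : ZMod n).val) % n := ZMod.val_add _ _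
  rw [h1, ZMod.val_one_eq_one_mod, Nat.mod_eq_of_lt hn2] at hv
  have hlt := ZMod.val_lt (a - 1)
  have hlt2 := ZMod.val_lt a
  rcases lt_or_ge ((a - 1).val + 1) n with h | h
  · rw [Nat.mod_eq_of_lt h] at hv
    omega
  · have he : (a - 1).val + 1 = n := by omega
    rw [he, Nat.mod_self] at hv
    omega

lemma chord_cycle (fst snd : E → V) (prec : V → E → E → Prop)
    (hno : NoOddCyclicCycle fst snd prec) {n : ℕ} [NeZero n]
    (c : ZMod n → V) (g : ZMod n → E) (hcinj : Function.Injective c)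
    (hjoins : ∀ i, Joins fst snd (g i) (c i) (c (i + 1)))
    (hcycpref : ∀ i, prec (c (i + 1)) (g i) (g (i + 1)))
    (e : E) (a b : ZMod n)
    (hJ : Joins fst snd e (c a) (c b))
    (hpa : prec (c a) (g (a - 1)) e)
    (hpb : prec (c b) e (g b))
    (hd2 : 2 ≤ (a - b).val)
    (hodd : Odd ((a - b).val + 1)) : False := by
  set d := (a - b).val with hd
  set m := d + 1 with hm
  have hdn : d < n := ZMod.val_lt _
  haveI : NeZero m := ⟨by omega⟩
  have hcast : ∀ u : ℕ, u < m → ((u : ZMod n)).val = u :=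
    fun u hu => ZMod.val_cast_of_lt (by omega)
  have hdcast : ((d : ℕ) : ZMod n) = a - b := ZMod.natCast_zmod_val (a - b)
  set ι : ZMod m → ZMod n := fun t => b + ((t.val : ℕ) : ZMod n) with hι
  set c' : ZMod m → V := fun t => c (ι t) with hc'
  set g' : ZMod m → E := fun t => if t.val = d then e else g (ι t) with hg'
  have hvm : ∀ t : ZMod m, t.val < m := fun t => ZMod.val_lt t
  have hval1 : (1 : ZMod m).val = 1 := by
    rw [ZMod.val_one_eq_one_mod]; exact Nat.mod_eq_of_lt (by omega)
  have hsucc : ∀ t : ZMod m, (t + 1).val = (t.val + 1) % m := by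
    intro t; rw [ZMod.val_add, hval1]
  have hιinj : Function.Injective ι := by
    intro t1 t2 h
    have h2 : ((t1.val : ℕ) : ZMod n) = ((t2.val : ℕ) : ZMod n) := by
      simp only [hι] at h
      exact add_left_cancel h
    have h3 := congrArg ZMod.val h2
    rw [hcast _ (hvm t1), hcast _ (hvm t2)] at h3
    exact ZMod.val_injective m h3
  have hshift : ∀ t : ZMod m, t.val < d → (t + 1).val = t.val + 1 ∧ ι (t + 1) = ι t + 1 := by
    intro t h
    have h1 : (t + 1).val = t.val + 1 := by
      rw [hsucc]; exact Nat.mod_eq_of_lt (by omega)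
    refine ⟨h1, ?_⟩
    simp only [hι, h1]
    push_cast
    ring
  have htop : ∀ t : ZMod m, t.val = d → ι t = a ∧ (t + 1).val = 0 := by
    intro t h
    constructor
    · simp only [hι, h, hdcast]; ring
    · rw [hsucc, h, ← hm, Nat.mod_self]
  have hι0 : ∀ t : ZMod m, t.val = 0 → ι t = b := by
    intro t h; simp only [hι, h]; push_cast; ring
  have hjoins' : ∀ t : ZMod m, Joins fst snd (g' t) (c' t) (c' (t + 1)) := by
    intro t
    have hu := hvm t
    by_cases hud : t.val = d
    · obtain ⟨hta, ht0⟩ := htop t hud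
      have h3 : g' t = e := by simp only [hg']; rw [if_pos hud]
      have h1 : c' t = c a := by simp only [hc', hta]
      have h2 : c' (t + 1) = c b := by simp only [hc', hι0 _ ht0]
      rw [h1, h2, h3]; exact hJ
    · have hult : t.val < d := by omega
      obtain ⟨h1, h2⟩ := hshift t hult
      have h3 : g' t = g (ι t) := by simp only [hg']; rw [if_neg hud]
      have h4 : c' (t + 1) = c (ι t + 1) := by simp only [hc', h2]
      rw [h3, h4]
      exact hjoins (ι t)
  have hpref' : ∀ t : ZMod m, prec (c' (t + 1)) (g' t) (g' (t + 1)) := by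
    intro t
    have hu := hvm t
    by_cases hud : t.val = d
    · obtain ⟨hta, ht0⟩ := htop t hud
      have h3 : g' t = e := by simp only [hg']; rw [if_pos hud]
      have h4 : g' (t + 1) = g b := by
        simp only [hg']; rw [if_neg (by omega), hι0 _ ht0]
      have h2 : c' (t + 1) = c b := by simp only [hc', hι0 _ ht0]
      rw [h2, h3, h4]; exact hpb
    · by_cases hud1 : t.val = d - 1
      · have hult : t.val < d := by omega
        obtain ⟨h1, _⟩ := hshift t hult
        have h1d : (t + 1).val = d := by omega
        obtain ⟨hta, _⟩ := htop (t + 1) h1d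
        have h3 : g' t = g (a - 1) := by
          simp only [hg']; rw [if_neg hud]
          congr 1
          simp only [hι, hud1]
          rw [Nat.cast_sub (by omega : 1 ≤ d), Nat.cast_one, hdcast]
          ring
        have h4 : g' (t + 1) = e := by simp only [hg']; rw [if_pos h1d]
        have h2 : c' (t + 1) = c a := by simp only [hc', hta]
        rw [h2, h3, h4]; exact hpa
      · have hult : t.val < d := by omega
        obtain ⟨h1, h2⟩ := hshift t hult
        have h3 : g' t = g (ι t) := by simp only [hg']; rw [if_neg hud]
        have h4 : g' (t + 1) = g (ι t + 1) := by
          simp only [hg']; rw [if_neg (by omega), h2]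
        have h5 : c' (t + 1) = c (ι t + 1) := by simp only [hc', h2]
        rw [h3, h4, h5]
        exact hcycpref (ι t)
  exact hno m hodd c' g' (hcinj.comp hιinj) hjoins' (Or.inl hpref')

end AuxLemmas

/-- let `x` be a half-integral point of `FSM(G, prec)` of a simple preference
system without odd cyclic-preference cycles, let `C` (given by vertices `c` and edges `g`,
with `g i ≺_{c (i+1)} g (i+1)`) be a cycle with cyclic preferences inside `E_{1/2}(x)`, and
let `e` be a chord of `C` with `x(φ(e)) = 1`. Then any two (distinct) edges of `C`
dominating `e` have indices of different parity. -/
theorem stmt_9 {V E : Type} [Fintype V] [Fintype E] (fst snd : E → V)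
    (prec : V → E → E → Prop) (hord : IsPrefOrder fst snd prec)
    (hsimple : SimpleG fst snd)
    (hno : NoOddCyclicCycle fst snd prec)
    (x : E → ℝ) (hx : x ∈ FSMset fst snd prec)
    (hhalf : ∀ e, x e = 0 ∨ x e = 1 / 2 ∨ x e = 1)
    (n : ℕ) (hn : 0 < n) (c : ZMod n → V) (g : ZMod n → E)
    (hcinj : Function.Injective c)
    (hjoins : ∀ i, Joins fst snd (g i) (c i) (c (i + 1)))
    (hcycpref : ∀ i, prec (c (i + 1)) (g i) (g (i + 1)))
    (hgx : ∀ i, x (g i) = 1 / 2)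
    (e : E) (hnotcyc : e ∉ Set.range g)
    (hchord : ∃ a b : ZMod n, Joins fst snd e (c a) (c b) ∧ a ≠ b ∧ b ≠ a + 1 ∧ a ≠ b + 1)
    (hphi : x e + ∑ f ∈ Finset.univ.filter
        (fun f => f ≠ e ∧ Dominates fst snd prec f e), x f = 1)
    (i j : ZMod n) (hij : i ≠ j)
    (hdi : Dominates fst snd prec (g i) e)
    (hdj : Dominates fst snd prec (g j) e) :
    i.val % 2 ≠ j.val % 2 := by
  classical
  haveI : NeZero n := ⟨hn.ne'⟩
  have htrans := hord.2.1
  have htricho := hord.2.2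
  -- the cycle itself has cyclic preferences, so n is even
  have hnotodd : ¬ Odd n := fun h => hno n h c g hcinj hjoins (Or.inl hcycpref)
  have heven : Even n := Nat.not_odd_iff_even.mp hnotodd
  obtain ⟨a, b, hJ, hab, hba1, hab1⟩ := hchord
  -- basic arithmetic in ZMod n
  haveI : NeZero (b - a) := ⟨sub_ne_zero_of_ne (Ne.symm hab)⟩
  have hd'lt : (b - a).val < n := ZMod.val_lt _
  have hd'0 : (b - a).val ≠ 0 := by
    intro h
    have h2 : (b - a) = 0 := by
      rw [← ZMod.natCast_zmod_val (b - a), h]; norm_num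
    exact (sub_ne_zero_of_ne (Ne.symm hab)) h2
  have hn2 : 2 ≤ n := by omega
  have hval1 : (1 : ZMod n).val = 1 := by
    rw [ZMod.val_one_eq_one_mod]; exact Nat.mod_eq_of_lt hn2
  have hd'1 : (b - a).val ≠ 1 := by
    intro h
    apply hba1
    have h2 : b - a = 1 := by
      rw [← ZMod.natCast_zmod_val (b - a), h]; norm_num
    linear_combination h2
  have hvneg : (a - b).val = n - (b - a).val := by
    have h2 : a - b = -(b - a) := by ring
    rw [h2, ZMod.val_neg_of_ne_zero]
  have habv1 : (a - b).val ≠ 1 := by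
    intro h
    apply hab1
    have h2 : a - b = 1 := by
      rw [← ZMod.natCast_zmod_val (a - b), h]; norm_num
    linear_combination h2
  have hn4 : 4 ≤ n := by omega
  have hone0 : (1 : ZMod n) ≠ 0 := by
    intro h
    have h2 := congrArg ZMod.val h
    rw [hval1, ZMod.val_zero] at h2
    omega
  have h2ne : (2 : ZMod n) ≠ 0 := by
    intro h
    have h2 : ((2 : ℕ) : ZMod n) = 0 := by push_cast; exact h
    rw [ZMod.natCast_eq_zero_iff] at h2
    have := Nat.le_of_dvd (by norm_num) h2
    omega
  have hsub1 : ∀ w : ZMod n, w - 1 ≠ w := by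
    intro w h
    exact hone0 (sub_eq_self.mp h)
  -- the edge map g is injective
  have hginj : Function.Injective g := by
    intro k l h
    by_contra hkl
    have hk := hjoins k
    have hl := hjoins l
    rw [h] at hk
    have hcontra : l = k + 1 ∧ k = l + 1 := by
      rcases hk with ⟨h1, h2⟩ | ⟨h1, h2⟩ <;> rcases hl with ⟨h3, h4⟩ | ⟨h3, h4⟩
      · exact absurd (hcinj (h1.symm.trans h3)) hkl
      · exact ⟨(hcinj (h2.symm.trans h4)).symm, hcinj (h1.symm.trans h3)⟩
      · exact ⟨(hcinj (h1.symm.trans h3)).symm, hcinj (h2.symm.trans h4)⟩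
      · exact absurd (hcinj (h2.symm.trans h4)) hkl
    have e1 := hcontra.1
    have e2 := hcontra.2
    exact h2ne (by linear_combination - e1 - e2)
  -- basic incidence facts
  have hIe : ∀ u w : ZMod n, Joins fst snd e (c u) (c w) → Incid fst snd e (c u) := by
    intro u w h
    rcases h with ⟨h1, _⟩ | ⟨_, h2⟩
    · exact Or.inl h1
    · exact Or.inr h2
  have hIg1 : ∀ w : ZMod n, Incid fst snd (g (w - 1)) (c w) := by
    intro w
    have h := hjoins (w - 1)
    rw [sub_add_cancel] at h
    rcases h with ⟨_, h2⟩ | ⟨h1, _⟩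
    · exact Or.inr h2
    · exact Or.inl h1
  have hIg0 : ∀ w : ZMod n, Incid fst snd (g w) (c w) := by
    intro w
    rcases hjoins w with ⟨h1, _⟩ | ⟨_, h2⟩
    · exact Or.inl h1
    · exact Or.inr h2
  -- which cycle edges can dominate the chord, and at which endpoint
  have hdomside : ∀ (u w : ZMod n), Joins fst snd e (c u) (c w) →
      ∀ k : ZMod n, Dominates fst snd prec (g k) e →
      ((k = u - 1 ∨ k = u) ∧ prec (c u) (g k) e) ∨
      ((k = w - 1 ∨ k = w) ∧ prec (c w) (g k) e) := by
    intro u w hJ' k hk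
    obtain ⟨v, hev, hgv, hp⟩ := hk
    have hv : v = c u ∨ v = c w := by
      rcases hJ' with ⟨h1, h2⟩ | ⟨h1, h2⟩ <;> rcases hev with h | h
      · exact Or.inl (h.symm.trans h1)
      · exact Or.inr (h.symm.trans h2)
      · exact Or.inr (h.symm.trans h1)
      · exact Or.inl (h.symm.trans h2)
    have hside : ∀ y : ZMod n, Incid fst snd (g k) (c y) → k = y - 1 ∨ k = y := by
      intro y hy
      rcases hjoins k with ⟨h1, h2⟩ | ⟨h1, h2⟩ <;> rcases hy with h | h
      · exact Or.inr (hcinj (h1.symm.trans h))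
      · exact Or.inl (eq_sub_of_add_eq (hcinj (h2.symm.trans h)))
      · exact Or.inl (eq_sub_of_add_eq (hcinj (h1.symm.trans h)))
      · exact Or.inr (hcinj (h2.symm.trans h))
    rcases hv with hv | hv
    · exact Or.inl ⟨hside u (hv ▸ hgv), hv ▸ hp⟩
    · exact Or.inr ⟨hside w (hv ▸ hgv), hv ▸ hp⟩
  -- the sum argument: only g i and g j dominate e among cycle edges
  set s := Finset.univ.filter (fun f => f ≠ e ∧ Dominates fst snd prec f e) with hs
  have hne_g : ∀ k : ZMod n, g k ≠ e := fun k h => hnotcyc ⟨k, h⟩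
  have hmem : ∀ k : ZMod n, Dominates fst snd prec (g k) e → g k ∈ s := by
    intro k hk
    rw [hs, Finset.mem_filter]
    exact ⟨Finset.mem_univ _, hne_g k, hk⟩
  have hgij : g i ≠ g j := fun h => hij (hginj h)
  have hps : ({g i, g j} : Finset E) ⊆ s := by
    intro f hf
    rw [Finset.mem_insert, Finset.mem_singleton] at hf
    rcases hf with rfl | rfl
    · exact hmem i hdi
    · exact hmem j hdj
  have hsum_p : ∑ f ∈ ({g i, g j} : Finset E), x f = 1 := by
    rw [Finset.sum_pair hgij, hgx i, hgx j]; norm_num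
  have hsum_ge : (1 : ℝ) ≤ ∑ f ∈ s, x f := by
    rw [← hsum_p]
    exact Finset.sum_le_sum_of_subset_of_nonneg hps (fun f _ _ => hx.1 f)
  have hsum_eq : ∑ f ∈ s, x f = 1 := by
    have h0 := hx.1 e
    linarith [hphi]
  have hzero : ∀ f ∈ s, f ∉ ({g i, g j} : Finset E) → x f = 0 := by
    have hsd : ∑ f ∈ s \ ({g i, g j} : Finset E), x f = 0 := by
      have h := Finset.sum_sdiff (f := x) hps
      rw [hsum_p, hsum_eq] at h
      linarith
    intro f hf hfp
    have hnn : ∀ f ∈ s \ ({g i, g j} : Finset E), 0 ≤ x f := fun f _ => hx.1 f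
    exact (Finset.sum_eq_zero_iff_of_nonneg hnn).mp hsd f (Finset.mem_sdiff.mpr ⟨hf, hfp⟩)
  have hkey : ∀ k : ZMod n, Dominates fst snd prec (g k) e → k = i ∨ k = j := by
    intro k hk
    by_contra hcon
    push_neg at hcon
    have h1 : g k ∉ ({g i, g j} : Finset E) := by
      rw [Finset.mem_insert, Finset.mem_singleton]
      push_neg
      exact ⟨fun h => hcon.1 (hginj h), fun h => hcon.2 (hginj h)⟩
    have h2 := hzero (g k) (hmem k hk) h1
    rw [hgx k] at h2
    norm_num at h2
  -- dominance propagates backwards along the cycle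
  have hdom_prev : ∀ w : ZMod n, Incid fst snd e (c w) → prec (c w) (g w) e →
      Dominates fst snd prec (g (w - 1)) e ∧ prec (c w) (g (w - 1)) e := by
    intro w hie hp
    have hc := hcycpref (w - 1)
    rw [sub_add_cancel] at hc
    have hpw : prec (c w) (g (w - 1)) e := htrans _ _ _ _ hc hp
    exact ⟨⟨c w, hie, hIg1 w, hpw⟩, hpw⟩
  have hAdj : ∀ w : ZMod n, (w - 1).val % 2 ≠ w.val % 2 := fun w => val_sub_one_parity heven w
  -- the mixed case: the dominating edges sit at the two different endpoints of the chord
  have hmixed : ∀ (u w p q : ZMod n), Joins fst snd e (c u) (c w) →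
      u ≠ w → w ≠ u + 1 → u ≠ w + 1 →
      (∀ k : ZMod n, Dominates fst snd prec (g k) e → k = p ∨ k = q) →
      (p = u - 1 ∨ p = u) → (q = w - 1 ∨ q = w) →
      prec (c u) (g p) e → prec (c w) (g q) e →
      p.val % 2 ≠ q.val % 2 := by
    intro u w p q hJ' huw hwu1 huw1 hkey' hp hq hpp hpq
    have hIeu : Incid fst snd e (c u) := hIe u w hJ'
    have hIew : Incid fst snd e (c w) := hIe w u (joins_symm hJ')
    have hpu : p = u - 1 := by
      rcases hp with h | h
      · exact h
      · exfalso
        rw [h] at hpp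
        obtain ⟨hdom, _⟩ := hdom_prev u hIeu hpp
        rcases hkey' (u - 1) hdom with h' | h'
        · rw [h] at h'
          exact hsub1 u h'
        · rcases hq with rfl | rfl
          · exact huw (by linear_combination h')
          · exact huw1 (by linear_combination h')
    have hqw : q = w - 1 := by
      rcases hq with h | h
      · exact h
      · exfalso
        rw [h] at hpq
        obtain ⟨hdom, _⟩ := hdom_prev w hIew hpq
        rcases hkey' (w - 1) hdom with h' | h'
        · rw [hpu] at h'
          exact huw (by linear_combination - h')
        · rw [h] at h'
          exact hsub1 w h'
    subst hpu; subst hqw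
    -- g w does not dominate e
    have hgwnd : ¬ Dominates fst snd prec (g w) e := by
      intro h
      rcases hkey' w h with h' | h'
      · exact huw1 (by linear_combination - h')
      · exact hsub1 w h'.symm
    have hpew : prec (c w) e (g w) := by
      rcases htricho (c w) e (g w) hIew (hIg0 w) (Ne.symm (hne_g w)) with h | h
      · exact h
      · exact absurd ⟨c w, hIew, hIg0 w, h⟩ hgwnd
    -- suppose the parities agree; then we build an odd cycle with cyclic preferences
    intro hpar
    have hpa2 := hAdj u
    have hpb2 := hAdj w
    -- (u - w).val is even and at least 2
    have hne0 : (u - w).val ≠ 0 := by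
      intro h
      have h2 : u - w = 0 := by
        rw [← ZMod.natCast_zmod_val (u - w), h]; norm_num
      exact huw (by linear_combination h2)
    have hne1 : (u - w).val ≠ 1 := by
      intro h
      have h2 : u - w = 1 := by
        rw [← ZMod.natCast_zmod_val (u - w), h]; norm_num
      exact huw1 (by linear_combination h2)
    have hvadd : u.val = (w.val + (u - w).val) % n := by
      have h0 : w + (u - w) = u := by ring
      conv_lhs => rw [← h0]
      rw [ZMod.val_add]
    have hwv := ZMod.val_lt w
    have huv := ZMod.val_lt u
    have huwv := ZMod.val_lt (u - w)
    have hcases : u.val = w.val + (u - w).val ∨ u.val + n = w.val + (u - w).val := by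
      rcases lt_or_ge (w.val + (u - w).val) n with h | h
      · left; rw [hvadd, Nat.mod_eq_of_lt h]
      · right
        have h2 : w.val + (u - w).val - n < n := by omega
        rw [hvadd, Nat.mod_eq_sub_mod h, Nat.mod_eq_of_lt h2]
        omega
    obtain ⟨t, ht⟩ := heven
    have hodd : Odd ((u - w).val + 1) := ⟨(u - w).val / 2, by omega⟩
    exact chord_cycle fst snd prec hno c g hcinj hjoins hcycpref e u w hJ' hpp hpew
      (by omega) hodd
  -- final case analysis
  rcases hdomside a b hJ i hdi with ⟨hi, hpi⟩ | ⟨hi, hpi⟩ <;>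
    rcases hdomside a b hJ j hdj with ⟨hj, hpj⟩ | ⟨hj, hpj⟩
  · rcases hi with h1 | h1 <;> rcases hj with h2 | h2
    · exact absurd (h1.trans h2.symm) hij
    · rw [h1, h2]; exact hAdj a
    · rw [h1, h2]; exact fun h => hAdj a h.symm
    · exact absurd (h1.trans h2.symm) hij
  · exact hmixed a b i j hJ hab hba1 hab1 hkey hi hj hpi hpj
  · exact hmixed b a i j (joins_symm hJ) (Ne.symm hab) hab1 hba1 hkey hi hj hpi hpj
  · rcases hi with h1 | h1 <;> rcases hj with h2 | h2
    · exact absurd (h1.trans h2.symm) hij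
    · rw [h1, h2]; exact hAdj b
    · rw [h1, h2]; exact fun h => hAdj b h.symm
    · exact absurd (h1.trans h2.symm) hij
end

section
/- Let D be a clique-acyclic orientation of a line multigraph, with associated preference system (H, prec) on the root multigraph H (where e prec_v f iff (f, e) is an arc of D for edges e, f sharing endpoint v). Then the fractional kernel polytope FK(D) equals the fractional stable matching polytope FSM(H, prec), under the identification of vertices of D with edges of H. -/
attribute [local instance] Classical.propDecidable

lemma exists_sink' {E : Type} (Q : Finset E) (hne : Q.Nonempty) (R : E → E → Prop)
    (hac : ¬ ∃ a, Relation.TransGen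
      (fun e f => e ∈ (↑Q : Set E) ∧ f ∈ (↑Q : Set E) ∧ R e f) a a) :
    ∃ e ∈ Q, ∀ f ∈ Q, ¬ R e f := by
  by_contra h
  push_neg at h
  set R' := fun e f => e ∈ (↑Q : Set E) ∧ f ∈ (↑Q : Set E) ∧ R e f with hR'
  have hstep : ∀ e ∈ Q, ∃ f ∈ Q, R e f := h
  classical
  have hg : ∀ e : E, ∃ f : E, e ∈ Q → f ∈ Q ∧ R e f := by
    intro e
    by_cases he : e ∈ Q
    · obtain ⟨f, hf, hr⟩ := hstep e he
      exact ⟨f, fun _ => ⟨hf, hr⟩⟩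
    · exact ⟨e, fun h => absurd h he⟩
  choose g hgspec using hg
  obtain ⟨e₀, he₀⟩ := hne
  set a : ℕ → E := fun n => g^[n] e₀ with ha
  have haQ : ∀ n, a n ∈ Q := by
    intro n
    induction n with
    | zero => exact he₀
    | succ n ih =>
        have : a (n+1) = g (a n) := Function.iterate_succ_apply' g n e₀
        rw [this]
        exact (hgspec (a n) ih).1
  have haR : ∀ n, R' (a n) (a (n+1)) := by
    intro n
    have : a (n+1) = g (a n) := Function.iterate_succ_apply' g n e₀
    rw [this]
    exact ⟨haQ n, Finset.mem_coe.mpr (hgspec (a n) (haQ n)).1, (hgspec (a n) (haQ n)).2⟩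
  have hchain : ∀ d i, Relation.TransGen R' (a i) (a (i + d + 1)) := by
    intro d
    induction d with
    | zero => intro i; exact Relation.TransGen.single (haR i)
    | succ d ih =>
        intro i
        have h1 := ih i
        have h2 : R' (a (i + d + 1)) (a (i + d + 1 + 1)) := haR (i + d + 1)
        have h3 := h1.tail h2
        have heq : i + d + 1 + 1 = i + (d + 1) + 1 := by omega
        rw [heq] at h3
        exact h3
  have hmaps : ∀ n ∈ Finset.range (Q.card + 1), a n ∈ Q := fun n _ => haQ n
  have hcard : Q.card < (Finset.range (Q.card + 1)).card := by simp
  obtain ⟨i, hi, j, hj, hij, hinj⟩ :=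
    Finset.exists_ne_map_eq_of_card_lt_of_maps_to hcard hmaps
  rcases lt_or_gt_of_ne hij with hlt | hlt
  · exact hac ⟨a i, by have := hchain (j - i - 1) i
                       have hji : i + (j - i - 1) + 1 = j := by omega
                       rw [hji] at this; rw [← hinj] at this; exact this⟩
  · exact hac ⟨a j, by have := hchain (i - j - 1) j
                       have hji : j + (i - j - 1) + 1 = i := by omega
                       rw [hji] at this; rw [hinj] at this; exact this⟩

/-- let `D` (arc relation `Arc` on the edge set `E` of a multigraph `H`)
be a clique-acyclic orientation of the line multigraph `L(H)`, with associated preference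
system `e ≺_v f ↔ (f, e) ∈ A`. Then the fractional kernel polytope `FK(D)` equals the
fractional stable matching polytope `FSM(H, ≺)` (identifying vertices of `D` with edges
of `H`). -/
theorem stmt_11 {V E : Type} [Fintype V] [Fintype E] (fst snd : E → V)
    (Arc : E → E → Prop)
    (hirr : ∀ e, ¬ Arc e e)
    (horient : ∀ e f, e ≠ f →
      ((∃ v, Incid fst snd e v ∧ Incid fst snd f v) ↔ (Arc e f ∨ Arc f e)))
    (hone : ∀ e f, e ≠ f → Arc e f → Arc f e →
      ∃ v w, v ≠ w ∧ Incid fst snd e v ∧ Incid fst snd f v ∧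
        Incid fst snd e w ∧ Incid fst snd f w)
    (hca : ∀ Q : Set E, (∀ e ∈ Q, ∀ f ∈ Q, e ≠ f → Arc e f ∨ Arc f e) →
      ¬ ∃ a, Relation.TransGen (fun e f => e ∈ Q ∧ f ∈ Q ∧ Arc e f ∧ ¬ Arc f e) a a) :
    {x : E → ℝ |
        (∀ e, 0 ≤ x e) ∧
        (∀ e, x e + ∑ f ∈ Finset.univ.filter (fun f => Arc e f), x f ≥ 1) ∧
        (∀ Q : Finset E, (∀ e ∈ Q, ∀ f ∈ Q, e ≠ f → Arc e f ∨ Arc f e) →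
          ∑ e ∈ Q, x e ≤ 1)} =
      FSMset fst snd (fun v e f => Incid fst snd e v ∧ Incid fst snd f v ∧ Arc f e) := by
  classical
  set prec : V → E → E → Prop :=
    fun v e f => Incid fst snd e v ∧ Incid fst snd f v ∧ Arc f e with hprec
  have hdom : ∀ e f : E, f ≠ e → (Dominates fst snd prec f e ↔ Arc e f) := by
    intro e f hne
    constructor
    · rintro ⟨v, -, -, -, -, harc⟩
      exact harc
    · intro harc
      obtain ⟨v, hev, hfv⟩ := (horient e f (Ne.symm hne)).mpr (Or.inl harc)
      exact ⟨v, hev, hfv, hfv, hev, harc⟩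
  have hfilt : ∀ e : E, (Finset.univ.filter (fun f => Arc e f)) =
      (Finset.univ.filter (fun f => f ≠ e ∧ Dominates fst snd prec f e)) := by
    intro e
    ext f
    simp only [Finset.mem_filter, Finset.mem_univ, true_and]
    constructor
    · intro harc
      have hne : f ≠ e := by
        rintro rfl
        exact hirr f harc
      exact ⟨hne, (hdom e f hne).mpr harc⟩
    · rintro ⟨hne, hd⟩
      exact (hdom e f hne).mp hd
  ext x
  simp only [Set.mem_setOf_eq, FSMset]
  constructor
  · rintro ⟨h0, hcov, hcl⟩
    refine ⟨h0, ?_, ?_⟩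
    · intro v
      apply hcl
      intro e he f hf hne
      rw [Finset.mem_filter] at he hf
      exact (horient e f hne).mp ⟨v, he.2, hf.2⟩
    · intro e
      rw [← hfilt e]
      exact hcov e
  · rintro ⟨h0, hvert, hcov⟩
    refine ⟨h0, ?_, ?_⟩
    · intro e
      rw [hfilt e]
      exact hcov e
    · intro Q hQ
      rcases Q.eq_empty_or_nonempty with rfl | hne
      · simp
      have hac : ¬ ∃ a, Relation.TransGen
          (fun e f => e ∈ (↑Q : Set E) ∧ f ∈ (↑Q : Set E) ∧
            (fun a b => Arc a b ∧ ¬ Arc b a) e f) a a := by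
        intro hcyc
        refine hca (↑Q : Set E) ?_ ?_
        · intro a ha b hb hab
          exact hQ a (Finset.mem_coe.mp ha) b (Finset.mem_coe.mp hb) hab
        · exact hcyc
      obtain ⟨e, heQ, hsink⟩ := exists_sink' Q hne (fun a b => Arc a b ∧ ¬ Arc b a) hac
      -- pointwise inequality
      have hpt : ∀ g : E, (if g ∈ Q then x g else 0) + ((if g = e then x g else 0) +
          (if g ≠ e ∧ Dominates fst snd prec g e then x g else 0)) ≤
          (if Incid fst snd g (fst e) then x g else 0) +
          (if Incid fst snd g (snd e) then x g else 0) := by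
        intro g
        have hB1 : (0:ℝ) ≤ if Incid fst snd g (fst e) then x g else 0 := by
          split_ifs
          · exact h0 g
          · exact le_refl 0
        have hB2 : (0:ℝ) ≤ if Incid fst snd g (snd e) then x g else 0 := by
          split_ifs
          · exact h0 g
          · exact le_refl 0
        by_cases hge : g = e
        · subst hge
          have hu : Incid fst snd g (fst g) := Or.inl rfl
          have hw : Incid fst snd g (snd g) := Or.inr rfl
          rw [if_pos heQ, if_pos rfl,
            if_neg (by simp : ¬ (g ≠ g ∧ Dominates fst snd prec g g)),
            if_pos hu, if_pos hw]
          linarith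
        · rw [if_neg hge]
          by_cases harc : Arc e g
          · rw [if_pos (⟨hge, (hdom e g hge).mpr harc⟩ :
              g ≠ e ∧ Dominates fst snd prec g e)]
            by_cases hQg : g ∈ Q
            · have harc2 : Arc g e := by
                by_contra hnar
                exact hsink g hQg ⟨harc, hnar⟩
              obtain ⟨v1, v2, hv12, hev1, hgv1, hev2, hgv2⟩ :=
                hone e g (Ne.symm hge) harc harc2
              have hgboth : Incid fst snd g (fst e) ∧ Incid fst snd g (snd e) := by
                rcases hev1 with h1 | h1 <;> rcases hev2 with h2 | h2 <;>
                  subst h1 <;> subst h2 <;>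
                  first
                  | exact absurd rfl hv12
                  | exact ⟨hgv1, hgv2⟩
                  | exact ⟨hgv2, hgv1⟩
              rw [if_pos hQg, if_pos hgboth.1, if_pos hgboth.2]
              linarith
            · rw [if_neg hQg]
              obtain ⟨v, hev, hgv⟩ := (horient e g (Ne.symm hge)).mpr (Or.inl harc)
              rcases hev with h | h
              · subst h
                rw [if_pos hgv]
                linarith
              · subst h
                rw [if_pos hgv]
                linarith
          · have hnd : ¬ (g ≠ e ∧ Dominates fst snd prec g e) := by
              rintro ⟨hne', hd⟩
              exact harc ((hdom e g hne').mp hd)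
            rw [if_neg hnd]
            by_cases hQg : g ∈ Q
            · rw [if_pos hQg]
              obtain ⟨v, hev, hgv⟩ := (horient e g (Ne.symm hge)).mpr
                (hQ e heQ g hQg (Ne.symm hge))
              rcases hev with h | h
              · subst h
                rw [if_pos hgv]
                linarith
              · subst h
                rw [if_pos hgv]
                linarith
            · rw [if_neg hQg]
              linarith
      have hsum := Finset.sum_le_sum (fun g (_ : g ∈ (Finset.univ : Finset E)) => hpt g)
      rw [Finset.sum_add_distrib, Finset.sum_add_distrib, Finset.sum_add_distrib] at hsum
      have e1 : ∑ g ∈ Finset.univ, (if g ∈ Q then x g else 0) = ∑ g ∈ Q, x g := by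
        rw [Finset.sum_ite_mem, Finset.univ_inter]
      have e2 : ∑ g ∈ Finset.univ, (if g = e then x g else 0) = x e := by
        simp
      have e3 : ∑ g ∈ Finset.univ, (if g ≠ e ∧ Dominates fst snd prec g e then x g else 0) =
          ∑ f ∈ Finset.univ.filter (fun f => f ≠ e ∧ Dominates fst snd prec f e), x f :=
        (Finset.sum_filter _ _).symm
      have e4 : ∑ g ∈ Finset.univ, (if Incid fst snd g (fst e) then x g else 0) =
          ∑ g ∈ Finset.univ.filter (fun g => Incid fst snd g (fst e)), x g :=
        (Finset.sum_filter _ _).symm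
      have e5 : ∑ g ∈ Finset.univ, (if Incid fst snd g (snd e) then x g else 0) =
          ∑ g ∈ Finset.univ.filter (fun g => Incid fst snd g (snd e)), x g :=
        (Finset.sum_filter _ _).symm
      rw [e1, e2, e3, e4, e5] at hsum
      have hv1 := hvert (fst e)
      have hv2 := hvert (snd e)
      have hc := hcov e
      linarith
end

section
/- Let D be a clique-acyclic orientation of a line multigraph L(H), with associated preference system (H, prec). Then no point x of FSM(H, prec) with all coordinates in {0, 1/2, 1} satisfies x(O) = 3/2 for a triangle O of H (three pairwise adjacent vertices with an edge of O at each); consequently, the triangle constraints x(O) <= 1 for all triangles O are satisfied by every vertex of FSM(H, prec). -/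
attribute [local instance] Classical.propDecidable

section AuxStmt15

variable {V E : Type} [Fintype V] [Fintype E]

lemma incid_of_joins_left {fst snd : E → V} {e : E} {a b : V}
    (h : Joins fst snd e a b) : Incid fst snd e a := by
  rcases h with ⟨h1, h2⟩ | ⟨h1, h2⟩
  · exact Or.inl h1
  · exact Or.inr h2

lemma incid_of_joins_right {fst snd : E → V} {e : E} {a b : V}
    (h : Joins fst snd e a b) : Incid fst snd e b := by
  rcases h with ⟨h1, h2⟩ | ⟨h1, h2⟩
  · exact Or.inr h2
  · exact Or.inl h1

lemma eq_of_incid_of_joins {fst snd : E → V} {e : E} {a b z : V}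
    (h : Joins fst snd e a b) (hz : Incid fst snd e z) : z = a ∨ z = b := by
  rcases h with ⟨h1, h2⟩ | ⟨h1, h2⟩ <;> rcases hz with hz | hz
  · exact Or.inl (hz ▸ h1)
  · exact Or.inr (hz ▸ h2)
  · exact Or.inr (hz ▸ h1)
  · exact Or.inl (hz ▸ h2)

/-- The key estimate: if `e₁` has no out-arc to the other two triangle edges, then the
edge constraint for `e₁` together with the vertex constraints at its two endpoints
forces `x(O) ≤ 1`. -/
lemma key_sink (fst snd : E → V) (Arc : E → E → Prop) {x : E → ℝ}
    (hx : x ∈ FSMset fst snd (fun v e f => Incid fst snd e v ∧ Incid fst snd f v ∧ Arc f e))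
    {e₁ e₂ e₃ : E} {u v : V}
    (h12 : e₁ ≠ e₂) (h13 : e₁ ≠ e₃)
    (j1 : Joins fst snd e₁ u v)
    (i2 : Incid fst snd e₂ v) (i3 : Incid fst snd e₃ u)
    (s2 : ¬ Arc e₁ e₂) (s3 : ¬ Arc e₁ e₃) :
    x e₁ + x e₂ + x e₃ ≤ 1 := by
  obtain ⟨hx0, hxv, hxe⟩ := hx
  classical
  set Av : Finset E := Finset.univ.filter (fun f => Incid fst snd f v) with hAv
  set Au : Finset E := Finset.univ.filter (fun f => Incid fst snd f u) with hAu
  have he1v : e₁ ∈ Av := by simp [hAv, incid_of_joins_right j1]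
  have he1u : e₁ ∈ Au := by simp [hAu, incid_of_joins_left j1]
  have he2 : e₂ ∈ Av.erase e₁ := by
    simp [hAv, Finset.mem_erase, h12.symm, i2]
  have he3 : e₃ ∈ Au.erase e₁ := by
    simp [hAu, Finset.mem_erase, h13.symm, i3]
  set P : Finset E := (Av.erase e₁).erase e₂ with hP
  set Q : Finset E := (Au.erase e₁).erase e₃ with hQ
  have hsumv : x e₁ + (x e₂ + ∑ f ∈ P, x f) = ∑ f ∈ Av, x f := by
    rw [hP, Finset.add_sum_erase _ x he2, Finset.add_sum_erase _ x he1v]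
  have hsumu : x e₁ + (x e₃ + ∑ f ∈ Q, x f) = ∑ f ∈ Au, x f := by
    rw [hQ, Finset.add_sum_erase _ x he3, Finset.add_sum_erase _ x he1u]
  have hPle : x e₁ + (x e₂ + ∑ f ∈ P, x f) ≤ 1 := by rw [hsumv]; exact hxv v
  have hQle : x e₁ + (x e₃ + ∑ f ∈ Q, x f) ≤ 1 := by rw [hsumu]; exact hxv u
  -- the edge constraint for e₁
  have hedge := hxe e₁
  set S : Finset E := Finset.univ.filter
      (fun f => f ≠ e₁ ∧ Dominates fst snd
        (fun v e f => Incid fst snd e v ∧ Incid fst snd f v ∧ Arc f e) f e₁) with hS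
  have hsub : S ⊆ P ∪ Q := by
    intro f hf
    rw [hS, Finset.mem_filter] at hf
    obtain ⟨-, hne, z, hz1, hzf, -, -, harc⟩ := hf
    have hf2 : f ≠ e₂ := by rintro rfl; exact s2 harc
    have hf3 : f ≠ e₃ := by rintro rfl; exact s3 harc
    rcases eq_of_incid_of_joins j1 hz1 with rfl | rfl
    · exact Finset.mem_union_right _ (by simp [hQ, hAu, Finset.mem_erase, hf3, hne, hzf])
    · exact Finset.mem_union_left _ (by simp [hP, hAv, Finset.mem_erase, hf2, hne, hzf])
  have hS_le : ∑ f ∈ S, x f ≤ ∑ f ∈ P ∪ Q, x f :=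
    Finset.sum_le_sum_of_subset_of_nonneg hsub (fun i _ _ => hx0 i)
  have hunion : ∑ f ∈ P ∪ Q, x f + ∑ f ∈ P ∩ Q, x f = ∑ f ∈ P, x f + ∑ f ∈ Q, x f :=
    Finset.sum_union_inter
  have hint : (0:ℝ) ≤ ∑ f ∈ P ∩ Q, x f := Finset.sum_nonneg fun i _ => hx0 i
  have hedge' : x e₁ + ∑ f ∈ S, x f ≥ 1 := hedge
  linarith

lemma oneway (fst snd : E → V) (Arc : E → E → Prop)
    (horient : ∀ e f, e ≠ f →
      ((∃ v, Incid fst snd e v ∧ Incid fst snd f v) ↔ (Arc e f ∨ Arc f e)))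
    (hone : ∀ e f, e ≠ f → Arc e f → Arc f e →
      ∃ v w, v ≠ w ∧ Incid fst snd e v ∧ Incid fst snd f v ∧
        Incid fst snd e w ∧ Incid fst snd f w)
    {a b : E} {p : V} (hab : a ≠ b)
    (ha : Incid fst snd a p) (hb : Incid fst snd b p)
    (huniq : ∀ z, Incid fst snd a z → Incid fst snd b z → z = p) :
    (Arc a b ∧ ¬ Arc b a) ∨ (Arc b a ∧ ¬ Arc a b) := by
  have hnot : ¬ (Arc a b ∧ Arc b a) := by
    rintro ⟨h1, h2⟩
    obtain ⟨v', w', hne, hav, hbv, haw, hbw⟩ := hone a b hab h1 h2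
    exact hne ((huniq _ hav hbv).trans (huniq _ haw hbw).symm)
  have h := (horient a b hab).mp ⟨p, ha, hb⟩
  tauto

lemma nocycle (Arc : E → E → Prop)
    (hca : ∀ Q : Set E, (∀ e ∈ Q, ∀ f ∈ Q, e ≠ f → Arc e f ∨ Arc f e) →
      ¬ ∃ a, Relation.TransGen (fun e f => e ∈ Q ∧ f ∈ Q ∧ Arc e f ∧ ¬ Arc f e) a a)
    {a b c : E}
    (h1 : Arc a b ∧ ¬ Arc b a) (h2 : Arc b c ∧ ¬ Arc c b) (h3 : Arc c a ∧ ¬ Arc a c) :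
    False := by
  have hQ : ∀ e ∈ ({a, b, c} : Set E), ∀ f ∈ ({a, b, c} : Set E), e ≠ f →
      Arc e f ∨ Arc f e := by
    intro e he f hf hne
    simp only [Set.mem_insert_iff, Set.mem_singleton_iff] at he hf
    rcases he with rfl | rfl | rfl <;> rcases hf with rfl | rfl | rfl <;> tauto
  have ha : a ∈ ({a, b, c} : Set E) := by simp
  have hb : b ∈ ({a, b, c} : Set E) := by simp
  have hc : c ∈ ({a, b, c} : Set E) := by simp
  exact hca {a, b, c} hQ ⟨a,
    Relation.TransGen.head ⟨ha, hb, h1.1, h1.2⟩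
      (Relation.TransGen.head ⟨hb, hc, h2.1, h2.2⟩
        (Relation.TransGen.single ⟨hc, ha, h3.1, h3.2⟩))⟩

lemma triangle_le_one (fst snd : E → V) (Arc : E → E → Prop)
    (horient : ∀ e f, e ≠ f →
      ((∃ v, Incid fst snd e v ∧ Incid fst snd f v) ↔ (Arc e f ∨ Arc f e)))
    (hone : ∀ e f, e ≠ f → Arc e f → Arc f e →
      ∃ v w, v ≠ w ∧ Incid fst snd e v ∧ Incid fst snd f v ∧
        Incid fst snd e w ∧ Incid fst snd f w)
    (hca : ∀ Q : Set E, (∀ e ∈ Q, ∀ f ∈ Q, e ≠ f → Arc e f ∨ Arc f e) →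
      ¬ ∃ a, Relation.TransGen (fun e f => e ∈ Q ∧ f ∈ Q ∧ Arc e f ∧ ¬ Arc f e) a a)
    {x : E → ℝ}
    (hx : x ∈ FSMset fst snd (fun v e f => Incid fst snd e v ∧ Incid fst snd f v ∧ Arc f e))
    {e₁ e₂ e₃ : E} {u v w : V} (huv : u ≠ v) (hvw : v ≠ w) (huw : u ≠ w)
    (h12 : e₁ ≠ e₂) (h23 : e₂ ≠ e₃) (h13 : e₁ ≠ e₃)
    (j1 : Joins fst snd e₁ u v) (j2 : Joins fst snd e₂ v w) (j3 : Joins fst snd e₃ w u) :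
    x e₁ + x e₂ + x e₃ ≤ 1 := by
  have uniq12 : ∀ z, Incid fst snd e₁ z → Incid fst snd e₂ z → z = v := by
    intro z hz1 hz2
    rcases eq_of_incid_of_joins j1 hz1 with rfl | rfl
    · rcases eq_of_incid_of_joins j2 hz2 with h | h
      · exact h
      · exact absurd h huw
    · rfl
  have uniq23 : ∀ z, Incid fst snd e₂ z → Incid fst snd e₃ z → z = w := by
    intro z hz2 hz3
    rcases eq_of_incid_of_joins j2 hz2 with rfl | rfl
    · rcases eq_of_incid_of_joins j3 hz3 with h | h
      · exact h
      · exact absurd h.symm huv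
    · rfl
  have uniq31 : ∀ z, Incid fst snd e₃ z → Incid fst snd e₁ z → z = u := by
    intro z hz3 hz1
    rcases eq_of_incid_of_joins j3 hz3 with rfl | rfl
    · rcases eq_of_incid_of_joins j1 hz1 with h | h
      · exact absurd h huw.symm
      · exact absurd h hvw.symm
    · rfl
  have A12 := oneway fst snd Arc horient hone h12
    (incid_of_joins_right j1) (incid_of_joins_left j2) uniq12
  have A23 := oneway fst snd Arc horient hone h23
    (incid_of_joins_right j2) (incid_of_joins_left j3) uniq23
  have A31 := oneway fst snd Arc horient hone h13.symm
    (incid_of_joins_right j3) (incid_of_joins_left j1) uniq31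
  rcases A12 with ⟨a12, n21⟩ | ⟨a21, n12⟩
  · rcases A23 with ⟨a23, n32⟩ | ⟨a32, n23⟩
    · rcases A31 with ⟨a31, n13⟩ | ⟨a13, n31⟩
      · exact absurd (nocycle Arc hca ⟨a12, n21⟩ ⟨a23, n32⟩ ⟨a31, n13⟩) (fun h => h)
      · -- sink is e₃ : ¬Arc e₃ e₁, ¬Arc e₃ e₂
        have := key_sink fst snd Arc hx h13.symm h23.symm j3
          (incid_of_joins_left j1) (incid_of_joins_right j2) n31 n32
        linarith
    · -- sink is e₂ : ¬Arc e₂ e₃, ¬Arc e₂ e₁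
      have := key_sink fst snd Arc hx h23 h12.symm j2
        (incid_of_joins_left j3) (incid_of_joins_right j1) n23 n21
      linarith
  · rcases A31 with ⟨a31, n13⟩ | ⟨a13, n31⟩
    · -- sink is e₁ : ¬Arc e₁ e₂, ¬Arc e₁ e₃
      have := key_sink fst snd Arc hx h12 h13 j1
        (incid_of_joins_left j2) (incid_of_joins_right j3) n12 n13
      linarith
    · rcases A23 with ⟨a23, n32⟩ | ⟨a32, n23⟩
      · -- sink is e₃
        have := key_sink fst snd Arc hx h13.symm h23.symm j3
          (incid_of_joins_left j1) (incid_of_joins_right j2) n31 n32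
        linarith
      · -- cycle e₁ → e₃ → e₂ → e₁
        exact absurd (nocycle Arc hca ⟨a13, n31⟩ ⟨a32, n23⟩ ⟨a21, n12⟩) (fun h => h)

end AuxStmt15

/-- for a clique-acyclic orientation `D` of a line multigraph `L(H)` with
associated preference system `(H, ≺)`, no half-integral point `x` of `FSM(H, ≺)` has
`x(O) = 3/2` for a triangle `O` of `H`; consequently every vertex (extreme point) of
`FSM(H, ≺)` satisfies the triangle constraints `x(O) ≤ 1`. -/
theorem stmt_15 {V E : Type} [Fintype V] [Fintype E] (fst snd : E → V)
    (Arc : E → E → Prop)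
    (hirr : ∀ e, ¬ Arc e e)
    (horient : ∀ e f, e ≠ f →
      ((∃ v, Incid fst snd e v ∧ Incid fst snd f v) ↔ (Arc e f ∨ Arc f e)))
    (hone : ∀ e f, e ≠ f → Arc e f → Arc f e →
      ∃ v w, v ≠ w ∧ Incid fst snd e v ∧ Incid fst snd f v ∧
        Incid fst snd e w ∧ Incid fst snd f w)
    (hca : ∀ Q : Set E, (∀ e ∈ Q, ∀ f ∈ Q, e ≠ f → Arc e f ∨ Arc f e) →
      ¬ ∃ a, Relation.TransGen (fun e f => e ∈ Q ∧ f ∈ Q ∧ Arc e f ∧ ¬ Arc f e) a a) :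
    (∀ x ∈ FSMset fst snd (fun v e f => Incid fst snd e v ∧ Incid fst snd f v ∧ Arc f e),
      (∀ e, x e = 0 ∨ x e = 1 / 2 ∨ x e = 1) →
      ∀ (e₁ e₂ e₃ : E) (u v w : V), u ≠ v → v ≠ w → u ≠ w →
        e₁ ≠ e₂ → e₂ ≠ e₃ → e₁ ≠ e₃ →
        Joins fst snd e₁ u v → Joins fst snd e₂ v w → Joins fst snd e₃ w u →
        x e₁ + x e₂ + x e₃ ≠ 3 / 2) ∧
    (∀ x ∈ Set.extremePoints ℝ
        (FSMset fst snd (fun v e f => Incid fst snd e v ∧ Incid fst snd f v ∧ Arc f e)),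
      ∀ (e₁ e₂ e₃ : E) (u v w : V), u ≠ v → v ≠ w → u ≠ w →
        e₁ ≠ e₂ → e₂ ≠ e₃ → e₁ ≠ e₃ →
        Joins fst snd e₁ u v → Joins fst snd e₂ v w → Joins fst snd e₃ w u →
        x e₁ + x e₂ + x e₃ ≤ 1) := by
  constructor
  · intro x hx _ e₁ e₂ e₃ u v w huv hvw huw h12 h23 h13 j1 j2 j3
    have h := triangle_le_one fst snd Arc horient hone hca hx huv hvw huw h12 h23 h13 j1 j2 j3
    intro habs
    linarith
  · intro x hx e₁ e₂ e₃ u v w huv hvw huw h12 h23 h13 j1 j2 j3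
    exact triangle_le_one fst snd Arc horient hone hca hx.1 huv hvw huw h12 h23 h13 j1 j2 j3
end
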